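/- arXiv:1801.01208 — 7 statements merged into one kernel-verified Lean document; each statement's English description precedes it below -/
import Mathlib

section
/- Let P ⊆ ℝ^m and Q ⊆ ℝ^n be rational polyhedra, let I = {1,…,ℓ} with ℓ ≤ m and I′ = {1,…,ℓ′} with ℓ′ ≤ n and m − ℓ = n − ℓ′. Let g : ℝ^ℓ → ℝ^{ℓ′} be an integral affine transformation and define f : ℝ^m → ℝ^n by f(x¹, x²) = (g(x¹), x²), where x = (x¹, x²) with x¹ ∈ ℝ^ℓ. If f(P) ⊆ Q, then for every integer k ≥ 1 one has f(SC^k(P, I)) ⊆ SC^k(Q, I′). -/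
open Set

/-- The split closure of `P` with respect to a family `Λ` of (integral) linear
functionals: the intersection over all `f ∈ Λ` and all integers `c` of the convex
hull of `P` minus the split set `{x : c < f x < c + 1}`. -/
noncomputable def splitClosure {E : Type*} [AddCommGroup E] [Module ℝ E]
    (Λ : Set (E → ℝ)) (P : Set E) : Set E :=
  ⋂ f ∈ Λ, ⋂ c : ℤ, convexHull ℝ (P \ {x | (c : ℝ) < f x ∧ f x < c + 1})

/-- The family of split functionals on `ℝ^ℓ × ℝ^r` with integer coefficients supported
on the first block of coordinates, i.e. the family `𝒮(I)` with `I = {1,…,ℓ}`. -/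
def firstBlockSplits (ℓ r : ℕ) : Set (((Fin ℓ → ℝ) × (Fin r → ℝ)) → ℝ) :=
  {f | ∃ π : Fin ℓ → ℤ, f = fun p => ∑ i, (π i : ℝ) * p.1 i}

/-- A rational polyhedron in `ℝ^ℓ × ℝ^r`: the solution set of finitely many rational
linear inequalities. -/
def IsRatPolyhedron (ℓ r : ℕ) (P : Set ((Fin ℓ → ℝ) × (Fin r → ℝ))) : Prop :=
  ∃ (M : ℕ) (A₁ : Fin M → Fin ℓ → ℚ) (A₂ : Fin M → Fin r → ℚ) (b : Fin M → ℚ),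
    P = {p | ∀ i, (∑ j, (A₁ i j : ℝ) * p.1 j) + (∑ j, (A₂ i j : ℝ) * p.2 j) ≤ (b i : ℝ)}

lemma splitClosure_image' {E F : Type*} [AddCommGroup E] [Module ℝ E]
    [AddCommGroup F] [Module ℝ F] (f : E →ᵃ[ℝ] F)
    (Λ : Set (E → ℝ)) (Λ' : Set (F → ℝ))
    (pull : ∀ h ∈ Λ', ∀ c : ℤ, ∃ g ∈ Λ, ∃ d : ℤ,
      ∀ p : E, (((c:ℝ) < h (f p)) ∧ h (f p) < c+1) ↔ (((d:ℝ) < g p) ∧ g p < d+1))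
    (A : Set E) (B : Set F) (hAB : f '' A ⊆ B) :
    f '' splitClosure Λ A ⊆ splitClosure Λ' B := by
  rintro _ ⟨x, hx, rfl⟩
  simp only [splitClosure, mem_iInter] at hx ⊢
  intro h hh c
  obtain ⟨g, hg, d, hpull⟩ := pull h hh c
  have hx' := hx g hg d
  have himg : f x ∈ f '' convexHull ℝ (A \ {p | (d:ℝ) < g p ∧ g p < d+1}) :=
    mem_image_of_mem _ hx'
  rw [AffineMap.image_convexHull] at himg
  refine convexHull_mono ?_ himg
  rintro _ ⟨p, ⟨hpA, hpS⟩, rfl⟩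
  exact ⟨hAB (mem_image_of_mem _ hpA), fun hS => hpS ((hpull p).mp hS)⟩

lemma splitClosure_iterate_image {E F : Type*} [AddCommGroup E] [Module ℝ E]
    [AddCommGroup F] [Module ℝ F] (f : E →ᵃ[ℝ] F)
    (Λ : Set (E → ℝ)) (Λ' : Set (F → ℝ))
    (pull : ∀ h ∈ Λ', ∀ c : ℤ, ∃ g ∈ Λ, ∃ d : ℤ,
      ∀ p : E, (((c:ℝ) < h (f p)) ∧ h (f p) < c+1) ↔ (((d:ℝ) < g p) ∧ g p < d+1))
    (A : Set E) (B : Set F) (hAB : f '' A ⊆ B) (k : ℕ) :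
    f '' ((splitClosure Λ)^[k] A) ⊆ (splitClosure Λ')^[k] B := by
  induction k with
  | zero => exact hAB
  | succ n ih =>
    rw [Function.iterate_succ_apply', Function.iterate_succ_apply']
    exact splitClosure_image' f Λ Λ' pull _ _ ih


/-- Let `P ⊆ ℝ^m`, `Q ⊆ ℝ^n` be rational polyhedra with `m = ℓ + r`,
`n = ℓ' + r`, `I = {1,…,ℓ}`, `I' = {1,…,ℓ'}`.  Let `g : ℝ^ℓ → ℝ^{ℓ'}` be an integral
affine transformation, `f(x¹,x²) = (g(x¹), x²)`.  If `f(P) ⊆ Q`, then for every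
`k ≥ 1`, `f(SC^k(P,I)) ⊆ SC^k(Q,I')`. -/
theorem stmt0 (ℓ ℓ' r : ℕ)
    (P : Set ((Fin ℓ → ℝ) × (Fin r → ℝ))) (Q : Set ((Fin ℓ' → ℝ) × (Fin r → ℝ)))
    (hP : IsRatPolyhedron ℓ r P) (hQ : IsRatPolyhedron ℓ' r Q)
    (V : Fin ℓ' → Fin ℓ → ℤ) (v : Fin ℓ' → ℤ)
    (f : ((Fin ℓ → ℝ) × (Fin r → ℝ)) → ((Fin ℓ' → ℝ) × (Fin r → ℝ)))
    (hf : f = fun p => (fun i => (∑ j, (V i j : ℝ) * p.1 j) + (v i : ℝ), p.2))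
    (hfPQ : f '' P ⊆ Q) (k : ℕ) (hk : 1 ≤ k) :
    f '' ((splitClosure (firstBlockSplits ℓ r))^[k] P) ⊆
      (splitClosure (firstBlockSplits ℓ' r))^[k] Q := by
  -- the linear part
  set L : ((Fin ℓ → ℝ) × (Fin r → ℝ)) →ₗ[ℝ] ((Fin ℓ' → ℝ) × (Fin r → ℝ)) :=
    LinearMap.prodMap (Matrix.mulVecLin (fun i j => (V i j : ℝ))) LinearMap.id with hL
  set F : ((Fin ℓ → ℝ) × (Fin r → ℝ)) →ᵃ[ℝ] ((Fin ℓ' → ℝ) × (Fin r → ℝ)) :=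
    { toFun := f
      linear := L
      map_vadd' := by
        intro p w
        subst hf
        simp only [hL]
        ext i
        · simp [Matrix.mulVecLin, Matrix.mulVecBilin, Matrix.mulVec, dotProduct, mul_add,
            Finset.sum_add_distrib]
          ring
        · simp } with hF
  have hfF : f = ⇑F := rfl
  rw [hfF] at hfPQ ⊢
  refine splitClosure_iterate_image F _ _ ?_ P Q hfPQ k
  rintro h ⟨π', rfl⟩ c
  refine ⟨fun p => ∑ j, ((∑ i, π' i * V i j : ℤ) : ℝ) * p.1 j,
    ⟨fun j => ∑ i, π' i * V i j, rfl⟩, c - ∑ i, π' i * v i, ?_⟩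
  intro p
  have hval : (∑ i, (π' i : ℝ) * (F p).1 i)
      = (∑ j, ((∑ i, π' i * V i j : ℤ) : ℝ) * p.1 j) + ((∑ i, π' i * v i : ℤ) : ℝ) := by
    have : (F p).1 = fun i => (∑ j, (V i j : ℝ) * p.1 j) + (v i : ℝ) := by
      rw [hF]; subst hf; rfl
    rw [this]
    push_cast
    simp only [mul_add, Finset.sum_add_distrib, Finset.mul_sum, Finset.sum_mul, mul_assoc]
    rw [Finset.sum_comm]
  simp only [hval]
  push_cast
  constructor <;> rintro ⟨h1, h2⟩ <;> constructor <;> linarith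
end

section
/- Let q and u be positive integers, let B ∈ Γ^u_u be a unimodular binarization polytope, and let C ∈ Γ^q_u be any binarization polytope. Then there exists an integral affine transformation g : ℝ^{1+u} → ℝ^{1+q} of the form g(x,z) = (x, f(z)), with f : ℝ^u → ℝ^q integral affine, such that g(B) ⊆ C. -/
open Set

/-- A rational polytope in `ℝ × ℝ^q`: the convex hull of finitely many rational points. -/
def IsRatPolytopeBin (q : ℕ) (B : Set (ℝ × (Fin q → ℝ))) : Prop :=
  ∃ V : Finset (ℝ × (Fin q → ℝ)),
    (∀ p ∈ V, (∃ r : ℚ, p.1 = (r : ℝ)) ∧ ∀ j, ∃ r : ℚ, p.2 j = (r : ℝ)) ∧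
    B = convexHull ℝ (V : Set (ℝ × (Fin q → ℝ)))

/-- `B ∈ Γ^q_u`: a binarization polytope for a variable `x ∈ {0,…,u}` using `q` binary
variables: a rational polytope contained in `[0,u] × [0,1]^q` whose set of 0-1 points
projects (in the `x` coordinate) exactly onto `{0,1,…,u}`. -/
def IsBinPoly (u q : ℕ) (B : Set (ℝ × (Fin q → ℝ))) : Prop :=
  IsRatPolytopeBin q B ∧
  (∀ p ∈ B, 0 ≤ p.1 ∧ p.1 ≤ (u : ℝ) ∧ ∀ j, 0 ≤ p.2 j ∧ p.2 j ≤ 1) ∧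
  Prod.fst '' (B ∩ {p | ∀ j, p.2 j = 0 ∨ p.2 j = 1}) = {x : ℝ | ∃ k : ℕ, k ≤ u ∧ x = (k : ℝ)}

/-- A unimodular binarization polytope `B ∈ Γ^u_u`: a perfect binarization polytope
`B = conv{(j, w^j) : j = 0,…,u}` with `w^j ∈ {0,1}^u` such that the `u × u` matrix
with columns `w^j - w^0`, `j = 1,…,u`, is unimodular (integral with determinant `±1`). -/
def IsUnimodularBin (u : ℕ) (B : Set (ℝ × (Fin u → ℝ))) : Prop :=
  IsBinPoly u u B ∧
  ∃ w : Fin (u + 1) → Fin u → ℝ,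
    (∀ j i, w j i = 0 ∨ w j i = 1) ∧
    B = convexHull ℝ {p : ℝ × (Fin u → ℝ) | ∃ j : Fin (u + 1), p = (((j : ℕ) : ℝ), w j)} ∧
    ∃ N : Matrix (Fin u) (Fin u) ℤ,
      (∀ i j : Fin u, (N i j : ℝ) = w j.succ i - w 0 i) ∧ (N.det = 1 ∨ N.det = -1)

open Matrix

/-
Pick for every `k ∈ {0,…,u}` a 0-1 point `(k, z^k)` of `C`. Unimodularity of the vertex
differences `w^k - w^0` of `B` lets one solve `V w^k + v = z^k` for all `k` with `V`, `v`
integral: `V = M N⁻¹` with `M` the matrix of differences `z^k - z^0`. The resulting map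
`(x, z) ↦ (x, V z + v)` is affine and sends the vertices `(k, w^k)` of `B` into the convex
set `C`, hence all of `B`.
-/

theorem Matrix.exists_affine_interpolation {R ι : Type*} [CommRing R] {n : ℕ}
    (w : Fin (n + 1) → Fin n → R) (z : Fin (n + 1) → ι → R)
    (hw : IsUnit (Matrix.of fun i j : Fin n => w j.succ i - w 0 i).det) :
    ∃ (V : Matrix ι (Fin n) R) (v : ι → R), ∀ k, V *ᵥ w k + v = z k := by
  set N : Matrix (Fin n) (Fin n) R := Matrix.of fun i j => w j.succ i - w 0 i
  set M : Matrix ι (Fin n) R := Matrix.of fun i j => z j.succ i - z 0 i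
  set V := M * N⁻¹
  refine ⟨V, z 0 - V *ᵥ w 0, Fin.cases (by abel) fun j => ?_⟩
  have hVN : V * N = M := nonsing_inv_mul_cancel_right N M hw
  have hcol : V *ᵥ (w j.succ - w 0) = z j.succ - z 0 := by
    ext i
    simpa [mul_apply, mulVec, dotProduct, N, M] using congrFun (congrFun hVN i) j
  rw [mulVec_sub] at hcol
  linear_combination hcol

theorem IsRatPolytopeBin.convex {q : ℕ} {B : Set (ℝ × (Fin q → ℝ))}
    (hB : IsRatPolytopeBin q B) : Convex ℝ B := by
  obtain ⟨S, -, rfl⟩ := hB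
  exact convex_convexHull ℝ _

theorem exists_intCast_eq_of_eq_zero_or_eq_one {x : ℝ} (hx : x = 0 ∨ x = 1) :
    ∃ n : ℤ, (n : ℝ) = x := by
  rcases hx with rfl | rfl
  exacts [⟨0, Int.cast_zero⟩, ⟨1, Int.cast_one⟩]

theorem IsBinPoly.exists_intCast_mem {u q : ℕ} {C : Set (ℝ × (Fin q → ℝ))}
    (hC : IsBinPoly u q C) {k : ℕ} (hk : k ≤ u) :
    ∃ z : Fin q → ℤ, ((k : ℝ), fun i => (z i : ℝ)) ∈ C := by
  obtain ⟨p, ⟨hpC, hp01⟩, hpk⟩ : (k : ℝ) ∈ Prod.fst '' (C ∩ {p | ∀ j, p.2 j = 0 ∨ p.2 j = 1}) := by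
    rw [hC.2.2]; exact ⟨k, hk, rfl⟩
  choose z hz using fun i => exists_intCast_eq_of_eq_zero_or_eq_one (hp01 i)
  refine ⟨z, ?_⟩
  rwa [← hpk, funext hz]

def idProdIntAffine {ι κ : Type*} [Fintype κ] (V : Matrix ι κ ℤ) (v : ι → ℤ) :
    ℝ × (κ → ℝ) →ᵃ[ℝ] ℝ × (ι → ℝ) where
  toFun p := (p.1, fun i => (∑ j, (V i j : ℝ) * p.2 j) + (v i : ℝ))
  linear := LinearMap.id.prodMap (V.map (Int.cast : ℤ → ℝ)).mulVecLin
  map_vadd' p q := by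
    ext i
    · simp
    · simp [mulVec, dotProduct, mul_add, Finset.sum_add_distrib, add_assoc]

theorem idProdIntAffine_apply_intCast {ι κ : Type*} [Fintype κ] (V : Matrix ι κ ℤ) (v : ι → ℤ)
    (x : ℝ) (w : κ → ℤ) :
    idProdIntAffine V v (x, fun j => (w j : ℝ)) = (x, fun i => ((V *ᵥ w + v) i : ℝ)) := by
  simp [idProdIntAffine, mulVec, dotProduct]

theorem stmt1_general (u q : ℕ)
    (B : Set (ℝ × (Fin u → ℝ))) (C : Set (ℝ × (Fin q → ℝ)))
    (hB : IsUnimodularBin u B) (hC : IsBinPoly u q C) :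
    ∃ (V : Matrix (Fin q) (Fin u) ℤ) (v : Fin q → ℤ),
      (fun p : ℝ × (Fin u → ℝ) =>
        (p.1, fun i : Fin q => (∑ j, (V i j : ℝ) * p.2 j) + (v i : ℝ))) '' B ⊆ C := by
  obtain ⟨-, w, hw01, rfl, N, hN, hdet⟩ := hB
  choose W hW using fun k i => exists_intCast_eq_of_eq_zero_or_eq_one (hw01 k i)
  obtain rfl : (fun k i => (W k i : ℝ)) = w := funext₂ hW
  choose Z hZ using fun k : Fin (u + 1) => hC.exists_intCast_mem k.is_le
  beta_reduce at hN
  have hN' : N = Matrix.of fun i j => W j.succ i - W 0 i := by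
    ext i j
    exact_mod_cast hN i j
  obtain ⟨V, v, hVv⟩ :=
    Matrix.exists_affine_interpolation W Z (hN' ▸ Int.isUnit_iff.mpr hdet)
  refine ⟨V, v, ?_⟩
  change idProdIntAffine V v '' _ ⊆ C
  rw [AffineMap.image_convexHull]
  refine convexHull_min ?_ hC.1.convex
  rintro _ ⟨_, ⟨k, rfl⟩, rfl⟩
  rw [idProdIntAffine_apply_intCast, hVv]
  exact hZ k

/-- Let `q, u` be positive integers, `B ∈ Γ^u_u` unimodular and `C ∈ Γ^q_u`
arbitrary.  Then there exists an integral affine transformation `f : ℝ^u → ℝ^q`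
(given by an integral matrix `V` and integral vector `v`) such that the map
`g(x,z) = (x, f(z))` carries `B` into `C`: `g(B) ⊆ C`. -/
theorem stmt1 (u q : ℕ) (hu : 0 < u) (hq : 0 < q)
    (B : Set (ℝ × (Fin u → ℝ))) (C : Set (ℝ × (Fin q → ℝ)))
    (hB : IsUnimodularBin u B) (hC : IsBinPoly u q C) :
    ∃ (V : Matrix (Fin q) (Fin u) ℤ) (v : Fin q → ℤ),
      (fun p : ℝ × (Fin u → ℝ) =>
        (p.1, fun i : Fin q => (∑ j, (V i j : ℝ) * p.2 j) + (v i : ℝ))) '' B ⊆ C :=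
  stmt1_general u q B C hB hC
end

section
/- Let P = {x ∈ ℝ^n : Ax ≤ b, 0 ≤ x_i ≤ u_i for i ∈ I} be a rational polytope with I = {1,…,l}. Let ℬ = (B^1,…,B^l) be a binarization scheme in which each B^i ∈ Γ^{u_i}_{u_i} is a unimodular binarization polytope, and let 𝒞 = (C^1,…,C^l) be an arbitrary binarization scheme with C^i ∈ Γ^{q_i}_{u_i}. Then for every integer k ≥ 1, proj_x(SC^k(P_ℬ, I_ℬ)) ⊆ proj_x(SC^k(P_𝒞, I_𝒞)). -/
open Set

/-- The binary extended formulation `P_ℬ ⊆ ℝ^n × ℝ^{q₁} × ⋯ × ℝ^{q_l}` associated with a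
binarization scheme `ℬ = (B^1,…,B^l)`: the set of `(x,z)` with `x ∈ P` and
`(x_i, z_i) ∈ B^i` for each `i ∈ I = {1,…,l}`. -/
def extForm {n l : ℕ} (hln : l ≤ n) {q : Fin l → ℕ} (P : Set (Fin n → ℝ))
    (B : (i : Fin l) → Set (ℝ × (Fin (q i) → ℝ))) :
    Set ((Fin n → ℝ) × ((i : Fin l) → Fin (q i) → ℝ)) :=
  {p | p.1 ∈ P ∧ ∀ i : Fin l, (p.1 (Fin.castLE hln i), p.2 i) ∈ B i}

/-- The family of split functionals on the extended space corresponding to the index set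
`I_ℬ = {1,…,l} ∪ {n+1,…,n+q}`: integer coefficients on `x_1,…,x_l` and on all of the
binarization variables `z`, zero coefficients on `x_{l+1},…,x_n`. -/
def extSplits (n l : ℕ) (hln : l ≤ n) (q : Fin l → ℕ) :
    Set (((Fin n → ℝ) × ((i : Fin l) → Fin (q i) → ℝ)) → ℝ) :=
  {f | ∃ (π : Fin l → ℤ) (c : (i : Fin l) → Fin (q i) → ℤ),
    f = fun p => (∑ i, (π i : ℝ) * p.1 (Fin.castLE hln i)) +
      ∑ i, ∑ j, (c i j : ℝ) * p.2 i j}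

/-!
Unimodularity of `B^i` makes the differences `w^j - w^0` a basis of `ℤ^{u_i}`, so for any
choice of 0-1 points `(j, v^j) ∈ C^i` there are an integral matrix `R` and an integral vector
`d` with `R w^j + d = v^j` for all `j`. The affine map `(x, z) ↦ (x, (R_i z_i + d_i)_i)`
then sends the vertices of each `B^i` into `C^i`, hence `P_ℬ` into `P_𝒞`, fixes `x`, and
pulls every split functional for `I_𝒞` back to one for `I_ℬ` plus an integer constant.
Such an affine map carries the split closure of a set into the split closure of its image,
and by induction the same holds for `SC^k`.
-/

open Matrix

section SplitClosure

variable {E F : Type*} [AddCommGroup E] [Module ℝ E] [AddCommGroup F] [Module ℝ F]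
  {Λ : Set (E → ℝ)} {Λ' : Set (F → ℝ)} {X : Set E} {Y : Set F}

theorem mapsTo_splitClosure (Φ : E →ᵃ[ℝ] F)
    (hΛ : ∀ f ∈ Λ', ∃ g ∈ Λ, ∃ γ : ℤ, ∀ p, f (Φ p) = g p + γ) (hXY : MapsTo Φ X Y) :
    MapsTo Φ (splitClosure Λ X) (splitClosure Λ' Y) := by
  intro p hp
  simp only [splitClosure, mem_iInter] at hp ⊢
  intro f hf c
  obtain ⟨g, hg, γ, hfg⟩ := hΛ f hf
  have hsplit : MapsTo Φ (X \ {x | ((c - γ : ℤ) : ℝ) < g x ∧ g x < ((c - γ : ℤ) : ℝ) + 1})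
      (Y \ {y | (c : ℝ) < f y ∧ f y < c + 1}) := by
    refine fun x ⟨hxX, hxS⟩ => ⟨hXY hxX, fun ⟨h₁, h₂⟩ => hxS ?_⟩
    rw [hfg] at h₁ h₂
    push_cast
    constructor <;> linarith
  exact convexHull_mono hsplit.image_subset
    (Φ.image_convexHull _ ▸ mem_image_of_mem Φ (hp g hg (c - γ)))

theorem mapsTo_iterate_splitClosure (Φ : E →ᵃ[ℝ] F)
    (hΛ : ∀ f ∈ Λ', ∃ g ∈ Λ, ∃ γ : ℤ, ∀ p, f (Φ p) = g p + γ) (hXY : MapsTo Φ X Y) (k : ℕ) :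
    MapsTo Φ ((splitClosure Λ)^[k] X) ((splitClosure Λ')^[k] Y) := by
  induction k with
  | zero => exact hXY
  | succ k ih =>
    simpa only [Function.iterate_succ_apply'] using mapsTo_splitClosure Φ hΛ ih

end SplitClosure

theorem Matrix.exists_mulVec_add_eq_of_isUnit_det {u : ℕ} {κ : Type*}
    (w : Fin (u + 1) → Fin u → ℤ) (v : Fin (u + 1) → κ → ℤ) (N : Matrix (Fin u) (Fin u) ℤ)
    (hN : ∀ i j, N i j = w j.succ i - w 0 i) (hdet : IsUnit N.det) :
    ∃ (R : Matrix κ (Fin u) ℤ) (d : κ → ℤ), ∀ j, R *ᵥ w j + d = v j := by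
  let V : Matrix κ (Fin u) ℤ := .of fun t j => v j.succ t - v 0 t
  have hcol (j : Fin u) : (V * N⁻¹) *ᵥ (w j.succ - w 0) = v j.succ - v 0 := by
    have hNcol : w j.succ - w 0 = N *ᵥ Pi.single j 1 := by ext i; simp [hN]
    rw [hNcol, mulVec_mulVec, Matrix.mul_assoc, nonsing_inv_mul N hdet, Matrix.mul_one,
      mulVec_single_one]
    rfl
  refine ⟨V * N⁻¹, v 0 - (V * N⁻¹) *ᵥ w 0, Fin.cases (by abel) fun j => ?_⟩
  rw [← sub_add_cancel (v j.succ) (v 0), ← hcol j, mulVec_sub]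
  abel

def intAffineMap {ι κ : Type*} [Fintype ι] (R : Matrix κ ι ℤ) (d : κ → ℤ) :
    (ι → ℝ) →ᵃ[ℝ] (κ → ℝ) :=
  (R.map ((↑) : ℤ → ℝ)).mulVecLin.toAffineMap + AffineMap.const ℝ (ι → ℝ) ((↑) ∘ d)

theorem intAffineMap_apply {ι κ : Type*} [Fintype ι] (R : Matrix κ ι ℤ) (d : κ → ℤ)
    (z : ι → ℝ) : intAffineMap R d z = R.map (↑) *ᵥ z + (↑) ∘ d :=
  rfl

theorem intAffineMap_intCast {ι κ : Type*} [Fintype ι] (R : Matrix κ ι ℤ) (d : κ → ℤ)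
    (z : ι → ℤ) : intAffineMap R d ((↑) ∘ z) = (↑) ∘ (R *ᵥ z + d) := by
  ext t
  have hcast := RingHom.map_mulVec (Int.castRingHom ℝ) R z t
  rw [Int.coe_castRingHom] at hcast
  simp [intAffineMap_apply, hcast]

theorem exists_intCast_comp_eq {ι : Type*} {z : ι → ℝ} (hz : ∀ t, z t = 0 ∨ z t = 1) :
    ∃ z' : ι → ℤ, (↑) ∘ z' = z := by
  refine ⟨fun t => if z t = 0 then 0 else 1, funext fun t => ?_⟩
  rcases hz t with h | h <;> simp [h]

theorem IsBinPoly.convex {u q : ℕ} {C : Set (ℝ × (Fin q → ℝ))} (hC : IsBinPoly u q C) :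
    Convex ℝ C := by
  obtain ⟨⟨V, -, rfl⟩, -⟩ := hC
  exact convex_convexHull ℝ _

theorem IsBinPoly.exists_intCast_mem_s2 {u q : ℕ} {C : Set (ℝ × (Fin q → ℝ))}
    (hC : IsBinPoly u q C) {j : ℕ} (hj : j ≤ u) :
    ∃ v : Fin q → ℤ, ((j : ℝ), (↑) ∘ v) ∈ C := by
  obtain ⟨⟨x, z⟩, ⟨hzC, hz01⟩, rfl⟩ := (hC.2.2 ▸ ⟨j, hj, rfl⟩ :
    (j : ℝ) ∈ Prod.fst '' (C ∩ {p | ∀ t, p.2 t = 0 ∨ p.2 t = 1}))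
  obtain ⟨v, rfl⟩ := exists_intCast_comp_eq hz01
  exact ⟨v, hzC⟩

theorem IsUnimodularBin.exists_intAffineMap_mapsTo {u q : ℕ} {B : Set (ℝ × (Fin u → ℝ))}
    {C : Set (ℝ × (Fin q → ℝ))} (hB : IsUnimodularBin u B) (hC : IsBinPoly u q C) :
    ∃ (R : Matrix (Fin q) (Fin u) ℤ) (d : Fin q → ℤ),
      MapsTo ((AffineMap.id ℝ ℝ).prodMap (intAffineMap R d)) B C := by
  obtain ⟨-, w, hw01, rfl, N, hN, hdet⟩ := hB
  choose w' hw' using fun j => exists_intCast_comp_eq (hw01 j)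
  obtain rfl : w = fun j => (↑) ∘ w' j := funext fun j => (hw' j).symm
  choose v hv using fun j : Fin (u + 1) => hC.exists_intCast_mem_s2 (Nat.lt_succ_iff.mp j.isLt)
  obtain ⟨R, d, hRd⟩ := Matrix.exists_mulVec_add_eq_of_isUnit_det w' v N
    (fun i j => Int.cast_injective (α := ℝ) (by simpa using hN i j)) (Int.isUnit_iff.mpr hdet)
  refine ⟨R, d, mapsTo_iff_image_subset.mpr ?_⟩
  rw [AffineMap.image_convexHull]
  refine convexHull_min ?_ hC.convex
  rintro _ ⟨_, ⟨j, rfl⟩, rfl⟩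
  simpa [intAffineMap_intCast, hRd] using hv j

theorem dotProduct_intAffineMap {ι κ : Type*} [Fintype ι] [Fintype κ] (c : κ → ℤ)
    (R : Matrix κ ι ℤ) (d : κ → ℤ) (z : ι → ℝ) :
    (↑) ∘ c ⬝ᵥ intAffineMap R d z = (↑) ∘ (c ᵥ* R) ⬝ᵥ z + ((c ⬝ᵥ d : ℤ) : ℝ) := by
  have hcast : (↑) ∘ (c ᵥ* R) = (↑) ∘ c ᵥ* R.map ((↑) : ℤ → ℝ) := by
    ext s
    simpa using RingHom.map_vecMul (Int.castRingHom ℝ) R c s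
  rw [intAffineMap_apply, dotProduct_add, dotProduct_mulVec, hcast]
  simp [dotProduct]

section ExtendedFormulation

variable {n l : ℕ} {u q : Fin l → ℕ}

def binMap (R : ∀ i, Matrix (Fin (q i)) (Fin (u i)) ℤ) (d : ∀ i, Fin (q i) → ℤ) :
    (Fin n → ℝ) × ((i : Fin l) → Fin (u i) → ℝ) →ᵃ[ℝ]
      (Fin n → ℝ) × ((i : Fin l) → Fin (q i) → ℝ) :=
  (AffineMap.id ℝ _).prodMap
    (AffineMap.pi fun i => (intAffineMap (R i) (d i)).comp (AffineMap.proj i))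

theorem binMap_apply (R : ∀ i, Matrix (Fin (q i)) (Fin (u i)) ℤ) (d : ∀ i, Fin (q i) → ℤ)
    (p : (Fin n → ℝ) × ((i : Fin l) → Fin (u i) → ℝ)) :
    binMap R d p = (p.1, fun i => intAffineMap (R i) (d i) (p.2 i)) :=
  rfl

theorem mapsTo_binMap_extForm (hln : l ≤ n) (P : Set (Fin n → ℝ))
    {B : (i : Fin l) → Set (ℝ × (Fin (u i) → ℝ))} {C : (i : Fin l) → Set (ℝ × (Fin (q i) → ℝ))}
    {R : ∀ i, Matrix (Fin (q i)) (Fin (u i)) ℤ} {d : ∀ i, Fin (q i) → ℤ}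
    (hBC : ∀ i, MapsTo ((AffineMap.id ℝ ℝ).prodMap (intAffineMap (R i) (d i))) (B i) (C i)) :
    MapsTo (binMap R d) (extForm hln P B) (extForm hln P C) :=
  fun _ ⟨hpP, hpB⟩ => ⟨hpP, fun i => hBC i (hpB i)⟩

theorem exists_extSplits_comp_binMap (hln : l ≤ n) (R : ∀ i, Matrix (Fin (q i)) (Fin (u i)) ℤ)
    (d : ∀ i, Fin (q i) → ℤ) {f} (hf : f ∈ extSplits n l hln q) :
    ∃ g ∈ extSplits n l hln u, ∃ γ : ℤ, ∀ p, f (binMap R d p) = g p + γ := by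
  obtain ⟨π, c, rfl⟩ := hf
  refine ⟨_, ⟨π, fun i => c i ᵥ* R i, rfl⟩, ∑ i, c i ⬝ᵥ d i, fun p => ?_⟩
  have hblock i := dotProduct_intAffineMap (c i) (R i) (d i) (p.2 i)
  simp only [dotProduct, Function.comp_apply] at hblock
  simp only [binMap_apply, hblock, Finset.sum_add_distrib, dotProduct]
  push_cast
  ring

end ExtendedFormulation

theorem stmt2_general (n l : ℕ) (hln : l ≤ n)
    (u : Fin l → ℕ)
    (P : Set (Fin n → ℝ))
    (B : (i : Fin l) → Set (ℝ × (Fin (u i) → ℝ)))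
    (hB : ∀ i, IsUnimodularBin (u i) (B i))
    (q : Fin l → ℕ)
    (C : (i : Fin l) → Set (ℝ × (Fin (q i) → ℝ)))
    (hC : ∀ i, IsBinPoly (u i) (q i) (C i))
    (k : ℕ) :
    Prod.fst '' ((splitClosure (extSplits n l hln (fun i => u i)))^[k] (extForm hln P B)) ⊆
      Prod.fst '' ((splitClosure (extSplits n l hln q))^[k] (extForm hln P C)) := by
  choose R d hRd using fun i => (hB i).exists_intAffineMap_mapsTo (hC i)
  rintro _ ⟨p, hp, rfl⟩
  exact ⟨binMap R d p, mapsTo_iterate_splitClosure (binMap R d)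
    (fun _ hf => exists_extSplits_comp_binMap hln R d hf) (mapsTo_binMap_extForm hln P hRd) k hp,
    rfl⟩

/-- Let `P = {x ∈ ℝ^n : Ax ≤ b, 0 ≤ x_i ≤ u_i for i ∈ I}` be a
rational polytope with `I = {1,…,l}`.  Let `ℬ = (B^1,…,B^l)` be a binarization scheme
of unimodular binarization polytopes `B^i ∈ Γ^{u_i}_{u_i}` and `𝒞 = (C^1,…,C^l)` an
arbitrary binarization scheme with `C^i ∈ Γ^{q_i}_{u_i}`.  Then for every integer
`k ≥ 1`, `proj_x(SC^k(P_ℬ, I_ℬ)) ⊆ proj_x(SC^k(P_𝒞, I_𝒞))`. -/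
theorem stmt2 (n l m : ℕ) (hln : l ≤ n)
    (A : Fin m → Fin n → ℚ) (b : Fin m → ℚ) (u : Fin l → ℕ) (hu : ∀ i, 0 < u i)
    (P : Set (Fin n → ℝ))
    (hP : P = {x | (∀ r, ∑ j, (A r j : ℝ) * x j ≤ (b r : ℝ)) ∧
      ∀ i : Fin l, 0 ≤ x (Fin.castLE hln i) ∧ x (Fin.castLE hln i) ≤ (u i : ℝ)})
    (hPbdd : Bornology.IsBounded P)
    (B : (i : Fin l) → Set (ℝ × (Fin (u i) → ℝ)))
    (hB : ∀ i, IsUnimodularBin (u i) (B i))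
    (q : Fin l → ℕ)
    (C : (i : Fin l) → Set (ℝ × (Fin (q i) → ℝ)))
    (hC : ∀ i, IsBinPoly (u i) (q i) (C i))
    (k : ℕ) (hk : 1 ≤ k) :
    Prod.fst '' ((splitClosure (extSplits n l hln (fun i => u i)))^[k] (extForm hln P B)) ⊆
      Prod.fst '' ((splitClosure (extSplits n l hln q))^[k] (extForm hln P C)) :=
  stmt2_general n l hln u P B hB q C hC k
end

section
/- For every binarization polytope B ∈ Γ^q_u there exists a perfect binarization polytope B̂ ∈ Γ^q_u with B̂ ⊆ B. Consequently, if a binarization scheme ℬ = (B^1,…,B^l) has a component B^i that is not perfect, and ℬ̂ is obtained from ℬ by replacing B^i with such a perfect binarization polytope B̂^i ⊆ B^i, then P_ℬ̂ ⊆ P_ℬ. -/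
open Set

/-- `B ∈ Γ^q_u` is perfect: it is exact (for each `x ∈ {0,…,u}` there is a unique 0-1
vector `z` with `(x,z) ∈ B`) and it equals the convex hull of its 0-1 points. -/
def IsPerfectBin (u q : ℕ) (B : Set (ℝ × (Fin q → ℝ))) : Prop :=
  IsBinPoly u q B ∧
  (∀ k : ℕ, k ≤ u → ∃! z : Fin q → ℝ, (∀ j, z j = 0 ∨ z j = 1) ∧ ((k : ℝ), z) ∈ B) ∧
  B = convexHull ℝ (B ∩ {p | ∀ j, p.2 j = 0 ∨ p.2 j = 1})

/-- Every binarization polytope `B ∈ Γ^q_u` contains a perfect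
binarization polytope `B̂ ∈ Γ^q_u`.  Consequently, if a scheme `ℬ = (B^1,…,B^l)` has a
component `B^{i₀}` that is not perfect, and `ℬ̂` is obtained from `ℬ` by replacing
`B^{i₀}` with such a perfect binarization polytope `B̂^{i₀} ⊆ B^{i₀}`, then
`P_ℬ̂ ⊆ P_ℬ`. -/
theorem stmt5 (u q : ℕ) (hu : 0 < u) (hq : 0 < q) :
    (∀ B : Set (ℝ × (Fin q → ℝ)), IsBinPoly u q B →
      ∃ Bhat : Set (ℝ × (Fin q → ℝ)), IsPerfectBin u q Bhat ∧ Bhat ⊆ B) ∧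
    (∀ (n l m : ℕ) (hln : l ≤ n)
      (A : Fin m → Fin n → ℚ) (b : Fin m → ℚ) (uv : Fin l → ℕ) (qv : Fin l → ℕ)
      (P : Set (Fin n → ℝ)),
      (∀ i, 0 < uv i) →
      P = {x | (∀ r, ∑ j, (A r j : ℝ) * x j ≤ (b r : ℝ)) ∧
        ∀ i : Fin l, 0 ≤ x (Fin.castLE hln i) ∧ x (Fin.castLE hln i) ≤ (uv i : ℝ)} →
      ∀ (B Bhat : (i : Fin l) → Set (ℝ × (Fin (qv i) → ℝ))) (i₀ : Fin l),
        (∀ i, IsBinPoly (uv i) (qv i) (B i)) →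
        ¬ IsPerfectBin (uv i₀) (qv i₀) (B i₀) →
        IsPerfectBin (uv i₀) (qv i₀) (Bhat i₀) →
        Bhat i₀ ⊆ B i₀ →
        (∀ i, i ≠ i₀ → Bhat i = B i) →
        extForm hln P Bhat ⊆ extForm hln P B) := by
  constructor
  · intro B hB
    obtain ⟨⟨V, hVrat, hVeq⟩, hbox, hproj⟩ := hB
    have hBconv : Convex ℝ B := hVeq ▸ convex_convexHull ℝ _
    -- for each k there is a 0-1 point of B over k
    have hex : ∀ k : Fin (u + 1), ∃ zz : Fin q → ℝ,
        (∀ j, zz j = 0 ∨ zz j = 1) ∧ (((k : ℕ) : ℝ), zz) ∈ B := by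
      intro k
      have hk : (((k : ℕ) : ℝ)) ∈ Prod.fst '' (B ∩ {p | ∀ j, p.2 j = 0 ∨ p.2 j = 1}) := by
        rw [hproj]; exact ⟨(k : ℕ), Nat.lt_succ_iff.mp k.isLt, rfl⟩
      obtain ⟨p, ⟨hpB, hp01⟩, hp1⟩ := hk
      refine ⟨p.2, hp01, ?_⟩
      have : p = (((k : ℕ) : ℝ), p.2) := by rw [← hp1]
      rwa [← this]
    choose z hz01 hzB using hex
    -- fibers over a fixed 0-1 vector are singletons
    have hfiber : ∀ (x₁ x₂ : ℝ) (zz : Fin q → ℝ), (∀ j, zz j = 0 ∨ zz j = 1) →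
        (x₁, zz) ∈ B → (x₂, zz) ∈ B → x₁ = x₂ := by
      have key : ∀ (x₁ x₂ : ℝ) (zz : Fin q → ℝ), (∀ j, zz j = 0 ∨ zz j = 1) →
          (x₁, zz) ∈ B → (x₂, zz) ∈ B → x₁ < x₂ → False := by
        intro x₁ x₂ zz h01 h₁ h₂ hlt
        -- x₁ and x₂ are natural numbers
        have hn : ∀ x : ℝ, (x, zz) ∈ B → ∃ k : ℕ, k ≤ u ∧ x = (k : ℝ) := by
          intro x hx
          have : x ∈ Prod.fst '' (B ∩ {p | ∀ j, p.2 j = 0 ∨ p.2 j = 1}) :=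
            ⟨(x, zz), ⟨hx, h01⟩, rfl⟩
          rwa [hproj] at this
        obtain ⟨k₁, hk₁u, hk₁⟩ := hn x₁ h₁
        obtain ⟨k₂, hk₂u, hk₂⟩ := hn x₂ h₂
        -- x₂ ≥ x₁ + 1, so x₁ + 1/2 lies strictly between
        have hklt : k₁ < k₂ := by
          have := hlt; rw [hk₁, hk₂] at this; exact_mod_cast this
        have hge : x₁ + 1 ≤ x₂ := by
          rw [hk₁, hk₂]; exact_mod_cast hklt
        -- the point (x₁ + 1/2, zz) is in B
        set t : ℝ := (1 / 2) / (x₂ - x₁) with ht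
        have hx21 : (0 : ℝ) < x₂ - x₁ := by linarith
        have ht0 : 0 ≤ t := by positivity
        have ht1 : t ≤ 1 := by
          rw [ht, div_le_one hx21]; linarith
        have hmem : (1 - t) • ((x₁, zz) : ℝ × (Fin q → ℝ)) + t • (x₂, zz) ∈ B :=
          hBconv h₁ h₂ (by linarith) ht0 (by ring)
        have heq : (1 - t) • ((x₁, zz) : ℝ × (Fin q → ℝ)) + t • (x₂, zz)
            = (x₁ + 1 / 2, zz) := by
          have h1 : (1 - t) * x₁ + t * x₂ = x₁ + 1 / 2 := by
            have : t * (x₂ - x₁) = 1 / 2 := by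
              rw [ht]; field_simp
            nlinarith [this]
          refine Prod.ext ?_ ?_
          · simpa using h1
          · funext j
            simp [Prod.snd_add, Prod.smul_snd, Pi.add_apply, Pi.smul_apply, smul_eq_mul]
            ring
        rw [heq] at hmem
        obtain ⟨m, hmu, hm⟩ := hn _ hmem
        rw [hk₁] at hm
        have : (2 * m : ℝ) = 2 * k₁ + 1 := by linarith
        have : (2 * m : ℕ) = 2 * k₁ + 1 := by exact_mod_cast this
        omega
      intro x₁ x₂ zz h01 h₁ h₂
      rcases lt_trichotomy x₁ x₂ with h | h | h
      · exact absurd (key x₁ x₂ zz h01 h₁ h₂ h) (by simp)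
      · exact h
      · exact absurd (key x₂ x₁ zz h01 h₂ h₁ h) (by simp)
    have hzinj : ∀ k k' : Fin (u + 1), z k = z k' → k = k' := by
      intro k k' hzz
      have := hfiber ((k : ℕ) : ℝ) ((k' : ℕ) : ℝ) (z k) (hz01 k) (hzB k) (hzz ▸ hzB k')
      have : (k : ℕ) = (k' : ℕ) := by exact_mod_cast this
      exact Fin.ext this
    set v : Fin (u + 1) → ℝ × (Fin q → ℝ) := fun k => (((k : ℕ) : ℝ), z k) with hv
    set Bhat : Set (ℝ × (Fin q → ℝ)) := convexHull ℝ (Set.range v) with hBhat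
    have hrangesub : Set.range v ⊆ B := by rintro _ ⟨k, rfl⟩; exact hzB k
    have hBhatsub : Bhat ⊆ B := convexHull_min hrangesub hBconv
    -- every 0-1 point of Bhat is a vertex
    have h01 : ∀ p ∈ Bhat, (∀ j, p.2 j = 0 ∨ p.2 j = 1) → ∃ k, p = v k := by
      intro p hp hp01
      rw [hBhat, convexHull_range_eq_exists_affineCombination] at hp
      obtain ⟨s, w, hw0, hw1, hcomb⟩ := hp
      rw [Finset.affineCombination_eq_linear_combination s v w hw1] at hcomb
      have hp2 : ∀ j, p.2 j = ∑ i ∈ s, w i * z i j := by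
        intro j
        rw [← hcomb, Prod.snd_sum, Finset.sum_apply]
        refine Finset.sum_congr rfl fun i _ => ?_
        simp [hv, Prod.smul_snd]
      have hsupp : ∀ i ∈ s, w i ≠ 0 → z i = p.2 := by
        intro i hi hwi
        funext j
        rcases hp01 j with h0 | h1
        · -- all terms are nonneg and sum to 0
          have hsum0 : ∑ i ∈ s, w i * z i j = 0 := by rw [← hp2 j, h0]
          have hnn : ∀ i ∈ s, 0 ≤ w i * z i j := fun i hi =>
            mul_nonneg (hw0 i hi) (by rcases hz01 i j with h | h <;> rw [h] <;> norm_num)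
          have := (Finset.sum_eq_zero_iff_of_nonneg hnn).mp hsum0 i hi
          rcases hz01 i j with h | h
          · rw [h, h0]
          · exfalso; rw [h, mul_one] at this; exact hwi this
        · -- ∑ w i * (1 - z i j) = 0
          have hsum0 : ∑ i ∈ s, w i * (1 - z i j) = 0 := by
            have : ∑ i ∈ s, w i * (1 - z i j)
                = (∑ i ∈ s, w i) - ∑ i ∈ s, w i * z i j := by
              rw [← Finset.sum_sub_distrib]
              exact Finset.sum_congr rfl fun i _ => by ring
            rw [this, hw1, ← hp2 j, h1]; ring
          have hnn : ∀ i ∈ s, 0 ≤ w i * (1 - z i j) := fun i hi =>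
            mul_nonneg (hw0 i hi) (by rcases hz01 i j with h | h <;> rw [h] <;> norm_num)
          have := (Finset.sum_eq_zero_iff_of_nonneg hnn).mp hsum0 i hi
          rcases hz01 i j with h | h
          · exfalso; rw [h] at this; simp at this; exact hwi this
          · rw [h, h1]
      -- pick the unique support element
      have hne : ∃ i₀ ∈ s, w i₀ ≠ 0 := by
        by_contra hall
        push_neg at hall
        have : ∑ i ∈ s, w i = 0 := Finset.sum_eq_zero hall
        rw [hw1] at this; norm_num at this
      obtain ⟨i₀, hi₀s, hwi₀⟩ := hne
      refine ⟨i₀, ?_⟩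
      have hvs : ∀ i ∈ s, w i • v i = w i • v i₀ := by
        intro i hi
        by_cases hwi : w i = 0
        · rw [hwi, zero_smul, zero_smul]
        · have : z i = z i₀ := by rw [hsupp i hi hwi, hsupp i₀ hi₀s hwi₀]
          rw [hzinj i i₀ this]
      rw [← hcomb, Finset.sum_congr rfl hvs, ← Finset.sum_smul, hw1, one_smul]
    have hBhat01eq : Bhat ∩ {p | ∀ j, p.2 j = 0 ∨ p.2 j = 1} = Set.range v := by
      ext p
      constructor
      · rintro ⟨hp, hp01⟩
        obtain ⟨k, rfl⟩ := h01 p hp hp01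
        exact ⟨k, rfl⟩
      · rintro ⟨k, rfl⟩
        exact ⟨subset_convexHull ℝ _ ⟨k, rfl⟩, hz01 k⟩
    refine ⟨Bhat, ⟨⟨?_, ?_, ?_⟩, ?_, ?_⟩, hBhatsub⟩
    · -- rational polytope
      refine ⟨Finset.univ.image v, ?_, ?_⟩
      · intro p hp
        simp only [Finset.mem_image, Finset.mem_univ, true_and] at hp
        obtain ⟨k, rfl⟩ := hp
        refine ⟨⟨((k : ℕ) : ℚ), by push_cast; rfl⟩, fun j => ?_⟩
        rcases hz01 k j with h | h
        · exact ⟨0, by simp [hv, h]⟩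
        · exact ⟨1, by simp [hv, h]⟩
      · rw [hBhat]
        congr 1
        rw [Finset.coe_image, Finset.coe_univ, Set.image_univ]
    · -- box bounds
      intro p hp; exact hbox p (hBhatsub hp)
    · -- projection
      rw [hBhat01eq]
      ext x
      constructor
      · rintro ⟨_, ⟨k, rfl⟩, rfl⟩
        exact ⟨(k : ℕ), Nat.lt_succ_iff.mp k.isLt, rfl⟩
      · rintro ⟨k, hku, rfl⟩
        exact ⟨v ⟨k, Nat.lt_succ_of_le hku⟩, ⟨⟨k, Nat.lt_succ_of_le hku⟩, rfl⟩, rfl⟩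
    · -- exactness
      intro k hku
      refine ⟨z ⟨k, Nat.lt_succ_of_le hku⟩, ⟨hz01 _, ?_⟩, ?_⟩
      · exact subset_convexHull ℝ _ ⟨⟨k, Nat.lt_succ_of_le hku⟩, rfl⟩
      · rintro zz ⟨hzz01, hzzB⟩
        obtain ⟨k', hk'⟩ := h01 ((k : ℝ), zz) hzzB hzz01
        have h1 : (k : ℝ) = ((k' : ℕ) : ℝ) := congrArg Prod.fst hk'
        have h2 : zz = z k' := congrArg Prod.snd hk'
        have hk : (⟨k, Nat.lt_succ_of_le hku⟩ : Fin (u + 1)) = k' :=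
          Fin.ext (by exact_mod_cast h1)
        rw [h2, hk]
    · -- equals convex hull of its 0-1 points
      rw [hBhat01eq]
  · -- part 2: monotonicity of the extended formulation
    intro n l m hln A b uv qv P huv hP B Bhat i₀ hB hnp hperf hsub heq
    rintro p ⟨hp1, hp2⟩
    refine ⟨hp1, fun i => ?_⟩
    by_cases hi : i = i₀
    · subst hi; exact hsub (hp2 i)
    · rw [← heq i hi]; exact hp2 i
end

section
/- Let n and b̄ be positive integers with b̄ ≤ 2^n − 1, and let ā ∈ ℝ^n with ā_i = 2^{i−1} for i = 1,…,n. Write the binary expansion b̄ = Σ_{j=1}^n 2^{j−1} x̄_j with x̄ ∈ {0,1}^n, and let J = {j ∈ {1,…,n} : x̄_j = 0}. For each j ∈ J define a_j ∈ {0,1}^n by a_{jk} = x̄_k for k > j, a_{jj} = 1, and a_{jk} = 0 for k < j, and set b_j = (Σ_{k=1}^n a_{jk}) − 1. Then |J| ≤ n − 1 and conv({x ∈ {0,1}^n : ā·x ≤ b̄}) = {x ∈ [0,1]^n : a_j·x ≤ b_j for all j ∈ J}. In particular, the binary knapsack polytope conv({x ∈ {0,1}^n : ā·x ≤ b̄})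 is described by the bounds 0 ≤ x ≤ 1 together with at most n − 1 additional inequalities. -/
open Set Finset

namespace Stmt6Aux





variable {n : ℕ}

noncomputable def supp (xbar : Fin n → ℝ) (j : Fin n) : Finset (Fin n) :=
  Finset.univ.filter fun k => k = j ∨ (j < k ∧ xbar k = 1)

lemma mem_supp {xbar : Fin n → ℝ} {j k : Fin n} :
    k ∈ supp xbar j ↔ k = j ∨ (j < k ∧ xbar k = 1) := by
  simp [supp]

lemma zero_one_sum {s : Finset (Fin n)} {f : Fin n → ℝ}
    (h01 : ∀ i ∈ s, f i = 0 ∨ f i = 1) (hlt : ∑ i ∈ s, f i < 1) :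
    ∀ i ∈ s, f i = 0 := by
  intro i hi
  rcases h01 i hi with h | h
  · exact h
  · exfalso
    have : (1 : ℝ) ≤ ∑ i ∈ s, f i := by
      rw [← h]
      exact Finset.single_le_sum (fun k hk => by rcases h01 k hk with h' | h' <;> simp [h']) hi
    linarith

lemma frac_single {s : Finset (Fin n)} {x : Fin n → ℝ} {w : Fin n}
    (hw : w ∈ s) (hw0 : 0 < x w) (hw1 : x w < 1)
    (hint : ∀ k ∈ s, k ≠ w → x k = 0 ∨ x k = 1)
    (hsum : ∑ k ∈ s, x k = (s.card : ℝ) - 1) : False := by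
  have hsplit : x w + ∑ k ∈ s.erase w, x k = ∑ k ∈ s, x k :=
    Finset.add_sum_erase s x hw
  have hcard : (s.erase w).card + 1 = s.card := Finset.card_erase_add_one hw
  have hsum' : ∑ k ∈ s.erase w, (1 - x k) = x w := by
    rw [Finset.sum_sub_distrib, Finset.sum_const, nsmul_eq_mul, mul_one]
    have h2 : ∑ k ∈ s.erase w, x k = (s.card : ℝ) - 1 - x w := by linarith [hsplit, hsum]
    rw [h2]
    have : ((s.erase w).card : ℝ) + 1 = s.card := by exact_mod_cast congrArg Nat.cast hcard
    linarith
  have h01 : ∀ k ∈ s.erase w, (1 - x k) = 0 ∨ (1 - x k) = 1 := by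
    intro k hk
    rcases hint k (Finset.mem_of_mem_erase hk) (Finset.ne_of_mem_erase hk) with h | h <;>
      simp [h]
  have hall := zero_one_sum h01 (by rw [hsum']; exact hw1)
  have : ∑ k ∈ s.erase w, (1 - x k) = 0 := Finset.sum_eq_zero hall
  rw [hsum'] at this
  linarith

lemma a_eq_indicator {xbar : Fin n → ℝ} (hxbar : ∀ j, xbar j = 0 ∨ xbar j = 1)
    {a : Fin n → Fin n → ℝ}
    (ha : ∀ j k, a j k = if j < k then xbar k else if k = j then 1 else 0)
    (j k : Fin n) : a j k = if k ∈ supp xbar j then 1 else 0 := by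
  rw [ha]
  rcases lt_trichotomy j k with h | h | h
  · rcases hxbar k with h0 | h1
    · simp [h, mem_supp, h.ne', h0]
    · simp [h, mem_supp, h1]
  · simp [h, mem_supp]
  · have : ¬ j < k := not_lt.mpr h.le
    have hne : k ≠ j := h.ne
    simp [this, hne, mem_supp, not_lt.mpr h.le]

lemma rowsum {xbar : Fin n → ℝ} (hxbar : ∀ j, xbar j = 0 ∨ xbar j = 1)
    {a : Fin n → Fin n → ℝ}
    (ha : ∀ j k, a j k = if j < k then xbar k else if k = j then 1 else 0)
    (j : Fin n) (y : Fin n → ℝ) :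
    ∑ k, a j k * y k = ∑ k ∈ supp xbar j, y k := by
  rw [Finset.sum_congr rfl fun k _ => by
    rw [a_eq_indicator hxbar ha, ite_mul, one_mul, zero_mul]]
  simp [Finset.sum_ite_mem]

lemma bval {xbar : Fin n → ℝ} (hxbar : ∀ j, xbar j = 0 ∨ xbar j = 1)
    {a : Fin n → Fin n → ℝ}
    (ha : ∀ j k, a j k = if j < k then xbar k else if k = j then 1 else 0)
    {b : Fin n → ℝ} (hbdef : ∀ j, b j = (∑ k, a j k) - 1) (j : Fin n) :
    b j = ((supp xbar j).card : ℝ) - 1 := by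
  rw [hbdef]
  congr 1
  rw [Finset.sum_congr rfl fun k _ => a_eq_indicator hxbar ha j k]
  simp






lemma sum_split (f : Fin n → ℝ) (j : Fin n) :
    ∑ k, f k = (∑ k ∈ Finset.univ.filter (· < j), f k) + f j
      + ∑ k ∈ Finset.univ.filter (j < ·), f k := by
  classical
  rw [← Finset.sum_filter_add_sum_filter_not Finset.univ (· < j) f]
  have : Finset.univ.filter (fun k => ¬ k < j) =
      insert j (Finset.univ.filter (j < ·)) := by
    ext k
    simp only [Finset.mem_filter, Finset.mem_univ, true_and, Finset.mem_insert, not_lt]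
    constructor
    · intro h
      rcases eq_or_lt_of_le h with h' | h'
      · exact Or.inl h'.symm
      · exact Or.inr h'
    · rintro (rfl | h)
      · exact le_refl _
      · exact h.le
  rw [this, Finset.sum_insert (by simp)]
  ring

lemma pow_bound (j : Fin n) :
    ∑ k ∈ Finset.univ.filter (· < j), (2:ℝ) ^ (k : ℕ) ≤ 2 ^ (j : ℕ) - 1 := by
  classical
  have h1 : ∑ k ∈ Finset.univ.filter (· < j), (2:ℝ) ^ (k : ℕ)
      = ∑ k : Fin n, (if k < j then (2:ℝ) ^ (k:ℕ) else 0) := by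
    rw [Finset.sum_filter]
  have h2 : ∑ k : Fin n, (if k < j then (2:ℝ) ^ (k:ℕ) else 0)
      = ∑ i ∈ Finset.range n, (if i < j.val then (2:ℝ) ^ i else 0) := by
    simp only [Fin.lt_def]
    exact Fin.sum_univ_eq_sum_range (fun i => if i < (j:ℕ) then (2:ℝ) ^ i else 0) n
  have h3 : ∑ i ∈ Finset.range n, (if i < j.val then (2:ℝ) ^ i else 0)
      = ∑ i ∈ Finset.range j.val, (if i < j.val then (2:ℝ) ^ i else 0) := by
    refine (Finset.sum_subset (Finset.range_subset_range.mpr j.isLt.le) ?_).symm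
    intro i _ hi
    rw [Finset.mem_range] at hi
    rw [if_neg hi]
  have h4 : ∑ i ∈ Finset.range j.val, (if i < j.val then (2:ℝ) ^ i else 0)
      = ∑ i ∈ Finset.range j.val, (2:ℝ) ^ i := by
    apply Finset.sum_congr rfl
    intro i hi
    rw [if_pos (Finset.mem_range.mp hi)]
  have h5 : ∑ i ∈ Finset.range j.val, (2:ℝ) ^ i = 2 ^ (j:ℕ) - 1 := by
    rw [geom_sum_eq (by norm_num : (2:ℝ) ≠ 1) j.val]
    norm_num
  rw [h1, h2, h3, h4, h5]

/-- Comparison of binary values. -/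
lemma value_lt {xbar x : Fin n → ℝ} (hxbar : ∀ k, xbar k = 0 ∨ xbar k = 1)
    (hx0 : ∀ k, 0 ≤ x k) (j : Fin n) (hxj : x j = 1) (hxbarj : xbar j = 0)
    (habove : ∀ k, j < k → xbar k = 1 → x k = 1) :
    ∑ k : Fin n, 2 ^ (k:ℕ) * xbar k < ∑ k : Fin n, 2 ^ (k:ℕ) * x k := by
  rw [sum_split (fun k : Fin n => 2 ^ (k:ℕ) * xbar k) j,
    sum_split (fun k : Fin n => 2 ^ (k:ℕ) * x k) j]
  have h1 : ∑ k ∈ Finset.univ.filter (· < j), 2 ^ (k:ℕ) * xbar k ≤ 2 ^ (j:ℕ) - 1 := by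
    calc ∑ k ∈ Finset.univ.filter (· < j), 2 ^ (k:ℕ) * xbar k
        ≤ ∑ k ∈ Finset.univ.filter (· < j), (2:ℝ) ^ (k:ℕ) := by
          apply Finset.sum_le_sum
          intro k _
          rcases hxbar k with h | h
          · rw [h, mul_zero]; positivity
          · rw [h, mul_one]
      _ ≤ 2 ^ (j:ℕ) - 1 := pow_bound j
  have h2 : ∑ k ∈ Finset.univ.filter (j < ·), 2 ^ (k:ℕ) * xbar k
      ≤ ∑ k ∈ Finset.univ.filter (j < ·), 2 ^ (k:ℕ) * x k := by
    apply Finset.sum_le_sum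
    intro k hk
    rw [Finset.mem_filter] at hk
    rcases hxbar k with h | h
    · rw [h, mul_zero]
      exact mul_nonneg (by positivity) (hx0 k)
    · rw [h, habove k hk.2 h]
  have h3 : (0:ℝ) ≤ ∑ k ∈ Finset.univ.filter (· < j), 2 ^ (k:ℕ) * x k := by
    apply Finset.sum_nonneg
    intro k _
    exact mul_nonneg (by positivity) (hx0 k)
  have hp : (0:ℝ) < 2 ^ (j:ℕ) := by positivity
  rw [hxj, hxbarj]
  nlinarith

lemma move (hn : 0 < n) (J : Finset (Fin n)) (Sp : Fin n → Finset (Fin n)) (β : Fin n → ℝ)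
    (x d : Fin n → ℝ)
    (hbox : ∀ i, 0 ≤ x i ∧ x i ≤ 1)
    (hrows : ∀ j ∈ J, ∑ k ∈ Sp j, x k ≤ β j)
    (hdfrac : ∀ i, d i ≠ 0 → 0 < x i ∧ x i < 1)
    (hdle : ∀ i, |d i| ≤ 1)
    (htight : ∀ j ∈ J, ∑ k ∈ Sp j, x k = β j → ∑ k ∈ Sp j, d k = 0) :
    ∃ ε : ℝ, 0 < ε ∧
      ((∀ i, 0 ≤ x i + ε * d i ∧ x i + ε * d i ≤ 1) ∧
        ∀ j ∈ J, ∑ k ∈ Sp j, (x k + ε * d k) ≤ β j) ∧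
      ((∀ i, 0 ≤ x i - ε * d i ∧ x i - ε * d i ≤ 1) ∧
        ∀ j ∈ J, ∑ k ∈ Sp j, (x k - ε * d k) ≤ β j) := by
  classical
  set g : Fin n → ℝ := fun i => if d i = 0 then 1 else min (x i) (1 - x i) with hg
  set h : Fin n → ℝ := fun j =>
    if ∑ k ∈ Sp j, x k = β j then 1 else (β j - ∑ k ∈ Sp j, x k) / n with hh
  set E : Finset ℝ := insert 1 ((Finset.univ.image g) ∪ (J.image h)) with hE
  have hEne : E.Nonempty := ⟨1, by simp [hE]⟩
  set ε : ℝ := E.min' hEne with hε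
  have hgpos : ∀ i, 0 < g i := by
    intro i
    by_cases hd : d i = 0
    · simp [hg, hd]
    · obtain ⟨h1, h2⟩ := hdfrac i hd
      simp only [hg, if_neg hd, lt_min_iff]
      constructor <;> linarith
  have hhpos : ∀ j ∈ J, 0 < h j := by
    intro j hj
    by_cases ht : ∑ k ∈ Sp j, x k = β j
    · simp [hh, ht]
    · have hlt : ∑ k ∈ Sp j, x k < β j := lt_of_le_of_ne (hrows j hj) ht
      simp only [hh, if_neg ht]
      apply div_pos (by linarith) (by exact_mod_cast hn)
  have hεpos : 0 < ε := by
    rw [hε]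
    refine (Finset.lt_min'_iff _ _).mpr ?_
    intro y hy
    rw [hE] at hy
    simp only [Finset.mem_insert, Finset.mem_union, Finset.mem_image] at hy
    rcases hy with rfl | ⟨i, _, rfl⟩ | ⟨j, hj, rfl⟩
    · norm_num
    · exact hgpos i
    · exact hhpos j hj
  have hεg : ∀ i, ε ≤ g i := fun i =>
    Finset.min'_le E _ (by
      rw [hE]
      exact Finset.mem_insert_of_mem
        (Finset.mem_union_left _ (Finset.mem_image_of_mem g (Finset.mem_univ i))))
  have hεh : ∀ j ∈ J, ε ≤ h j := fun j hj =>
    Finset.min'_le E _ (by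
      rw [hE]
      exact Finset.mem_insert_of_mem
        (Finset.mem_union_right _ (Finset.mem_image_of_mem h hj)))
  -- box bounds
  have hboxpm : ∀ (σ : ℝ), |σ| = 1 → ∀ i, 0 ≤ x i + σ * ε * d i ∧ x i + σ * ε * d i ≤ 1 := by
    intro σ hσ i
    by_cases hd : d i = 0
    · simp [hd, hbox i]
    · have hge : ε ≤ min (x i) (1 - x i) := by
        have t : ε ≤ if d i = 0 then 1 else min (x i) (1 - x i) := hεg i
        rwa [if_neg hd] at t
      have h1 : ε ≤ x i := le_trans hge (min_le_left _ _)
      have h2 : ε ≤ 1 - x i := le_trans hge (min_le_right _ _)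
      have habs : |σ * ε * d i| ≤ ε := by
        rw [abs_mul, abs_mul, hσ, one_mul, abs_of_pos hεpos]
        calc ε * |d i| ≤ ε * 1 := mul_le_mul_of_nonneg_left (hdle i) hεpos.le
          _ = ε := mul_one ε
      obtain ⟨hl, hr⟩ := abs_le.mp habs
      constructor <;> linarith
  -- row bounds
  have hrowpm : ∀ (σ : ℝ), |σ| = 1 → ∀ j ∈ J, ∑ k ∈ Sp j, (x k + σ * ε * d k) ≤ β j := by
    intro σ hσ j hj
    rw [Finset.sum_add_distrib]
    by_cases ht : ∑ k ∈ Sp j, x k = β j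
    · have hz := htight j hj ht
      have : ∑ k ∈ Sp j, σ * ε * d k = σ * ε * ∑ k ∈ Sp j, d k := by
        rw [Finset.mul_sum]
      rw [this, hz, mul_zero, add_zero, ht]
    · have hlt : ∑ k ∈ Sp j, x k < β j := lt_of_le_of_ne (hrows j hj) ht
      have hhj : ε ≤ (β j - ∑ k ∈ Sp j, x k) / n := by
        have t : ε ≤ if ∑ k ∈ Sp j, x k = β j then 1
            else (β j - ∑ k ∈ Sp j, x k) / n := hεh j hj
        rwa [if_neg ht] at t
      have habs : |∑ k ∈ Sp j, d k| ≤ n := by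
        calc |∑ k ∈ Sp j, d k| ≤ ∑ k ∈ Sp j, |d k| := Finset.abs_sum_le_sum_abs _ _
          _ ≤ ∑ k ∈ Sp j, (1:ℝ) := Finset.sum_le_sum fun k _ => hdle k
          _ = (Sp j).card := by simp
          _ ≤ n := by
            have := Finset.card_le_card (Finset.subset_univ (Sp j))
            simp only [Finset.card_univ, Fintype.card_fin] at this
            exact_mod_cast this
      have hsum : ∑ k ∈ Sp j, σ * ε * d k = σ * ε * ∑ k ∈ Sp j, d k := by
        rw [Finset.mul_sum]
      rw [hsum]
      have hnpos : (0:ℝ) < n := by exact_mod_cast hn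
      have h1 : ε * n ≤ β j - ∑ k ∈ Sp j, x k := by
        rw [le_div_iff₀ hnpos] at hhj
        exact hhj
      have h2 : σ * ε * ∑ k ∈ Sp j, d k ≤ ε * n := by
        calc σ * ε * ∑ k ∈ Sp j, d k ≤ |σ * ε * ∑ k ∈ Sp j, d k| := le_abs_self _
          _ = |σ| * |ε| * |∑ k ∈ Sp j, d k| := by rw [abs_mul, abs_mul]
          _ = ε * |∑ k ∈ Sp j, d k| := by rw [hσ, abs_of_pos hεpos, one_mul]
          _ ≤ ε * n := by
            apply mul_le_mul_of_nonneg_left habs hεpos.le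
      linarith
  refine ⟨ε, hεpos, ⟨?_, ?_⟩, ⟨?_, ?_⟩⟩
  · intro i
    have := hboxpm 1 (by norm_num) i
    simpa using this
  · intro j hj
    have := hrowpm 1 (by norm_num) j hj
    simpa using this
  · intro i
    have := hboxpm (-1) (by norm_num) i
    constructor <;> { have h := this; simp only [neg_mul, one_mul] at h; linarith [h.1, h.2] }
  · intro j hj
    have := hrowpm (-1) (by norm_num) j hj
    have heq : ∀ k, x k + (-1) * ε * d k = x k - ε * d k := by intro k; ring
    rwa [Finset.sum_congr rfl fun k _ => heq k] at this

lemma exists_dir (xbar : Fin n → ℝ) (hxbar : ∀ j, xbar j = 0 ∨ xbar j = 1)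
    (J : Finset (Fin n)) (hJ : ∀ j, j ∈ J ↔ xbar j = 0)
    (x : Fin n → ℝ) (hbox : ∀ i, 0 ≤ x i ∧ x i ≤ 1)
    (hfrac : ∃ i, ¬(x i = 0 ∨ x i = 1)) :
    ∃ d : Fin n → ℝ, d ≠ 0 ∧ (∀ i, d i ≠ 0 → 0 < x i ∧ x i < 1) ∧ (∀ i, |d i| ≤ 1) ∧
      (∀ j ∈ J, ∑ k ∈ supp xbar j, x k = ((supp xbar j).card : ℝ) - 1 →
        ∑ k ∈ supp xbar j, d k = 0) := by
  classical
  obtain ⟨i0, hi0⟩ := hfrac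
  have hfr : ∀ i, ¬(x i = 0 ∨ x i = 1) → 0 < x i ∧ x i < 1 := by
    intro i hi
    push_neg at hi
    rcases hbox i with ⟨h0, h1⟩
    exact ⟨lt_of_le_of_ne h0 (Ne.symm hi.1), lt_of_le_of_ne h1 hi.2⟩
  set tight : Fin n → Prop :=
    fun j => ∑ k ∈ supp xbar j, x k = ((supp xbar j).card : ℝ) - 1 with htight
  set FF : Finset (Fin n) :=
    Finset.univ.filter (fun k => ¬(x k = 0 ∨ x k = 1) ∧ xbar k = 1) with hFF
  have hmemFF : ∀ k, k ∈ FF ↔ (¬(x k = 0 ∨ x k = 1) ∧ xbar k = 1) := by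
    intro k; simp [hFF]
  by_cases hFFe : FF = ∅
  · -- Case A : all fractional coordinates lie in J
    have hxb0 : xbar i0 = 0 := by
      rcases hxbar i0 with h | h
      · exact h
      · exact absurd ((hmemFF i0).mpr ⟨hi0, h⟩) (by simp [hFFe])
    refine ⟨fun k => if k = i0 then 1 else 0, ?_, ?_, ?_, ?_⟩
    · intro h
      have := congrFun h i0
      simp at this
    · intro i hdi
      by_cases h : i = i0
      · subst h; exact hfr i hi0
      · simp [h] at hdi
    · intro i
      by_cases h : i = i0 <;> simp [h]
    · intro j hj htj
      rw [Finset.sum_ite_eq' (supp xbar j) i0 (fun _ => (1:ℝ))]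
      by_cases hji : j = i0
      · subst hji
        exfalso
        refine frac_single (x := x) (w := j) (mem_supp.mpr (Or.inl rfl))
          (hfr j hi0).1 (hfr j hi0).2 ?_ htj
        intro k hk hkj
        rcases mem_supp.mp hk with h | ⟨hlt, h1⟩
        · exact absurd h hkj
        · by_contra hkf
          exact absurd ((hmemFF k).mpr ⟨hkf, h1⟩) (by simp [hFFe])
      · rw [if_neg]
        intro hmem
        rcases mem_supp.mp hmem with h | ⟨_, h1⟩
        · exact hji h.symm
        · rw [hxb0] at h1; norm_num at h1
  · -- Case B : there are fractional coordinates with xbar = 1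
    have hFFne : FF.Nonempty := Finset.nonempty_of_ne_empty hFFe
    set k2 : Fin n := FF.max' hFFne with hk2
    have hk2FF : k2 ∈ FF := FF.max'_mem hFFne
    have hk2f : ¬(x k2 = 0 ∨ x k2 = 1) := ((hmemFF k2).mp hk2FF).1
    have hk2x : xbar k2 = 1 := ((hmemFF k2).mp hk2FF).2
    have hle2 : ∀ k ∈ FF, k ≤ k2 := fun k hk => FF.le_max' k hk
    have hJne2 : ∀ j ∈ J, j ≠ k2 := by
      intro j hj h
      rw [← h, (hJ j).mp hj] at hk2x
      norm_num at hk2x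
    -- claim 1
    have claim1 : ∀ j ∈ J, tight j → j < k2 →
        (∀ k, ¬(x k = 0 ∨ x k = 1) → xbar k = 1 → j < k → k = k2) →
        ¬(x j = 0 ∨ x j = 1) := by
      intro j hj htj hjk2 hbetween hjint
      refine frac_single (x := x) (w := k2)
        (mem_supp.mpr (Or.inr ⟨hjk2, hk2x⟩)) (hfr k2 hk2f).1 (hfr k2 hk2f).2 ?_ htj
      intro k hk hkne
      by_contra hkf
      rcases mem_supp.mp hk with h | ⟨hlt, h1⟩
      · subst h; exact hkf hjint
      · exact hkne (hbetween k hkf h1 hlt)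
    -- claim 2
    have claim2 : ∀ j ∈ J, tight j → k2 < j → (x j = 0 ∨ x j = 1) := by
      intro j hj htj hk2j
      by_contra hjf
      refine frac_single (x := x) (w := j) (mem_supp.mpr (Or.inl rfl))
        (hfr j hjf).1 (hfr j hjf).2 ?_ htj
      intro k hk hkne
      by_contra hkf
      rcases mem_supp.mp hk with h | ⟨hlt, h1⟩
      · exact hkne h
      · have : k ≤ k2 := hle2 k ((hmemFF k).mpr ⟨hkf, h1⟩)
        exact absurd (lt_trans hk2j hlt) (not_lt.mpr this)
    by_cases hFF2 : ∀ k ∈ FF, k = k2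
    · -- Case B2 : `FF = {k2}`
      set C : Fin n → Prop := fun k => k ∈ J ∧ ¬(x k = 0 ∨ x k = 1) ∧ tight k with hC
      refine ⟨fun k => if k = k2 then (-1:ℝ) else if C k then 1 else 0, ?_, ?_, ?_, ?_⟩
      · intro h
        have := congrFun h k2
        simp at this
      · intro i hdi
        by_cases h : i = k2
        · rw [h]; exact hfr k2 hk2f
        · by_cases hc : C i
          · exact hfr i hc.2.1
          · simp [h, hc] at hdi
      · intro i
        show |if i = k2 then (-1:ℝ) else if C i then 1 else 0| ≤ 1
        split_ifs <;> norm_num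
      · intro j hj htj
        have hpt : ∀ k ∈ supp xbar j,
            (if k = k2 then (-1:ℝ) else if C k then 1 else 0) =
              (if k = k2 then (-1:ℝ) else 0) +
              (if k = j then (if C j then (1:ℝ) else 0) else 0) := by
          intro k hk
          by_cases h2 : k = k2
          · subst h2
            rw [if_pos rfl, if_pos rfl, if_neg (Ne.symm (hJne2 j hj)), add_zero]
          · rw [if_neg h2, if_neg h2]
            by_cases hkj : k = j
            · subst hkj; rw [if_pos rfl, zero_add]
            · rw [if_neg hkj, add_zero]
              rw [if_neg]
              intro hc
              rcases mem_supp.mp hk with h | ⟨hlt, h1⟩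
              · exact hkj h
              · rw [(hJ k).mp hc.1] at h1; norm_num at h1
        rw [Finset.sum_congr rfl hpt, Finset.sum_add_distrib,
          Finset.sum_ite_eq' (supp xbar j) k2 (fun _ => (-1:ℝ)),
          Finset.sum_ite_eq' (supp xbar j) j (fun _ => if C j then (1:ℝ) else 0),
          if_pos (mem_supp.mpr (Or.inl rfl))]
        by_cases hcj : C j
        · -- row j itself is fractional and tight; then j < k2
          have hjk2 : j < k2 := by
            rcases lt_trichotomy j k2 with h | h | h
            · exact h
            · exact absurd h (hJne2 j hj)
            · exact absurd (claim2 j hj htj h) hcj.2.1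
          rw [if_pos (mem_supp.mpr (Or.inr ⟨hjk2, hk2x⟩)), if_pos hcj]
          ring
        · have hjint : x j = 0 ∨ x j = 1 := by
            by_contra hjf
            exact hcj ⟨hj, hjf, htj⟩
          rw [if_neg hcj, add_zero, if_neg]
          intro hmem
          rcases mem_supp.mp hmem with h | ⟨hlt, _⟩
          · exact (hJne2 j hj) h.symm
          · refine absurd hjint (claim1 j hj htj hlt ?_)
            intro k hkf hk1 _
            exact hFF2 k ((hmemFF k).mpr ⟨hkf, hk1⟩)
    · -- Case B1 : FF has a second element
      push_neg at hFF2
      obtain ⟨kx, hkxFF, hkxne⟩ := hFF2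
      have herasene : (FF.erase k2).Nonempty := ⟨kx, Finset.mem_erase.mpr ⟨hkxne, hkxFF⟩⟩
      set k1 : Fin n := (FF.erase k2).max' herasene with hk1def
      have hk1mem : k1 ∈ FF.erase k2 := (FF.erase k2).max'_mem herasene
      have hk1ne2 : k1 ≠ k2 := (Finset.mem_erase.mp hk1mem).1
      have hk1FF : k1 ∈ FF := (Finset.mem_erase.mp hk1mem).2
      have hk1f : ¬(x k1 = 0 ∨ x k1 = 1) := ((hmemFF k1).mp hk1FF).1
      have hk1x : xbar k1 = 1 := ((hmemFF k1).mp hk1FF).2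
      have hk1lt2 : k1 < k2 := lt_of_le_of_ne (hle2 k1 hk1FF) hk1ne2
      have hmax1 : ∀ k ∈ FF, k ≠ k2 → k ≤ k1 := fun k hk hne =>
        (FF.erase k2).le_max' k (Finset.mem_erase.mpr ⟨hne, hk⟩)
      have hJne1 : ∀ j ∈ J, j ≠ k1 := by
        intro j hj h
        rw [← h, (hJ j).mp hj] at hk1x
        norm_num at hk1x
      set C : Fin n → Prop := fun k => k ∈ J ∧ k1 < k ∧ k < k2 ∧ tight k with hC
      have hCfr : ∀ k, C k → ¬(x k = 0 ∨ x k = 1) := by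
        intro k hc
        refine claim1 k hc.1 hc.2.2.2 hc.2.2.1 ?_
        intro k' hk'f hk'1 hkk'
        by_contra hne
        have : k' ≤ k1 := hmax1 k' ((hmemFF k').mpr ⟨hk'f, hk'1⟩) hne
        exact absurd (lt_trans hc.2.1 hkk') (not_lt.mpr this)
      refine ⟨fun k => if k = k2 then (-1:ℝ) else if k = k1 then 1 else
        if C k then 1 else 0, ?_, ?_, ?_, ?_⟩
      · intro h
        have := congrFun h k2
        simp at this
      · intro i hdi
        by_cases h2 : i = k2
        · rw [h2]; exact hfr k2 hk2f
        · by_cases h1 : i = k1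
          · rw [h1]; exact hfr k1 hk1f
          · by_cases hc : C i
            · exact hfr i (hCfr i hc)
            · simp [h2, h1, hc] at hdi
      · intro i
        show |if i = k2 then (-1:ℝ) else if i = k1 then 1 else if C i then 1 else 0| ≤ 1
        split_ifs <;> norm_num
      · intro j hj htj
        have hpt : ∀ k ∈ supp xbar j,
            (if k = k2 then (-1:ℝ) else if k = k1 then 1 else if C k then 1 else 0) =
              (if k = k2 then (-1:ℝ) else 0) + (if k = k1 then (1:ℝ) else 0) +
              (if k = j then (if C j then (1:ℝ) else 0) else 0) := by
          intro k hk
          by_cases h2 : k = k2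
          · subst h2
            rw [if_pos rfl, if_pos rfl, if_neg hk1ne2.symm,
              if_neg (Ne.symm (hJne2 j hj))]
            ring
          · rw [if_neg h2, if_neg h2]
            by_cases h1 : k = k1
            · subst h1
              rw [if_pos rfl, if_pos rfl, if_neg (Ne.symm (hJne1 j hj))]
              ring
            · rw [if_neg h1, if_neg h1]
              by_cases hkj : k = j
              · subst hkj
                rw [if_pos rfl]
                ring
              · rw [if_neg hkj]
                rw [if_neg]
                · ring
                · intro hc
                  rcases mem_supp.mp hk with h | ⟨hlt, hx1⟩
                  · exact hkj h
                  · rw [(hJ k).mp hc.1] at hx1; norm_num at hx1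
        rw [Finset.sum_congr rfl hpt, Finset.sum_add_distrib, Finset.sum_add_distrib,
          Finset.sum_ite_eq' (supp xbar j) k2 (fun _ => (-1:ℝ)),
          Finset.sum_ite_eq' (supp xbar j) k1 (fun _ => (1:ℝ)),
          Finset.sum_ite_eq' (supp xbar j) j (fun _ => if C j then (1:ℝ) else 0),
          if_pos (mem_supp.mpr (Or.inl rfl))]
        rcases lt_trichotomy j k1 with hjlt | hjeq | hjgt
        · -- j < k1 < k2 : both k1 k2 in the support, C j false
          have hCj : ¬ C j := fun hc => absurd hjlt (not_lt.mpr hc.2.1.le)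
          rw [if_pos (mem_supp.mpr (Or.inr ⟨lt_trans hjlt hk1lt2, hk2x⟩)),
            if_pos (mem_supp.mpr (Or.inr ⟨hjlt, hk1x⟩)), if_neg hCj]
          ring
        · exact absurd hjeq (hJne1 j hj)
        · rcases lt_trichotomy j k2 with hjlt2 | hjeq2 | hjgt2
          · -- k1 < j < k2 : row j is in the middle, tight, so C j holds
            have hCj : C j := ⟨hj, hjgt, hjlt2, htj⟩
            rw [if_pos (mem_supp.mpr (Or.inr ⟨hjlt2, hk2x⟩)), if_neg, if_pos hCj]
            · ring
            · intro hmem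
              rcases mem_supp.mp hmem with h | ⟨hlt, _⟩
              · exact (hJne1 j hj) h.symm
              · exact absurd (lt_trans hlt hjgt) (lt_irrefl j)
          · exact absurd hjeq2 (hJne2 j hj)
          · have hCj : ¬ C j := fun hc => absurd hc.2.2.1 (not_lt.mpr hjgt2.le)
            rw [if_neg, if_neg, if_neg hCj]
            · ring
            · intro hmem
              rcases mem_supp.mp hmem with h | ⟨hlt, _⟩
              · exact (hJne1 j hj) h.symm
              · exact absurd (lt_trans hlt hjgt) (lt_irrefl j)
            · intro hmem
              rcases mem_supp.mp hmem with h | ⟨hlt, _⟩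
              · exact (hJne2 j hj) h.symm
              · exact absurd (lt_trans hlt hjgt2) (lt_irrefl j)

end Stmt6Aux

open Stmt6Aux

/-- Let `n, b̄` be positive integers with `b̄ ≤ 2^n - 1` and
`ā_i = 2^{i-1}`.  Write the binary expansion `b̄ = Σ_j 2^{j-1} x̄_j` with
`x̄ ∈ {0,1}^n`, let `J = {j : x̄_j = 0}`, and for `j ∈ J` define the cover inequality
data `a_j ∈ {0,1}^n` (`a_{jk} = x̄_k` for `k > j`, `a_{jj} = 1`, `a_{jk} = 0` for
`k < j`) and `b_j = (Σ_k a_{jk}) - 1`.  Then `|J| ≤ n - 1` and the binary knapsack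
polytope `conv({x ∈ {0,1}^n : ā·x ≤ b̄})` equals
`{x ∈ [0,1]^n : a_j·x ≤ b_j for all j ∈ J}`; in particular it is described by the
bounds `0 ≤ x ≤ 1` together with at most `n - 1` additional inequalities. -/
theorem stmt6 (n : ℕ) (hn : 0 < n) (bbar : ℕ) (hb : 0 < bbar) (hble : bbar ≤ 2 ^ n - 1)
    (xbar : Fin n → ℝ) (hxbar : ∀ j, xbar j = 0 ∨ xbar j = 1)
    (hexp : (bbar : ℝ) = ∑ j : Fin n, 2 ^ (j : ℕ) * xbar j)
    (J : Finset (Fin n)) (hJ : ∀ j, j ∈ J ↔ xbar j = 0)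
    (a : Fin n → Fin n → ℝ)
    (ha : ∀ j k, a j k = if j < k then xbar k else if k = j then 1 else 0)
    (b : Fin n → ℝ) (hbdef : ∀ j, b j = (∑ k, a j k) - 1) :
    J.card ≤ n - 1 ∧
    convexHull ℝ {x : Fin n → ℝ |
        (∀ i, x i = 0 ∨ x i = 1) ∧ ∑ i : Fin n, 2 ^ (i : ℕ) * x i ≤ (bbar : ℝ)} =
      {x : Fin n → ℝ | (∀ i, 0 ≤ x i ∧ x i ≤ 1) ∧ ∀ j ∈ J, ∑ k, a j k * x k ≤ b j} := by
  classical
  set S : Set (Fin n → ℝ) := {x : Fin n → ℝ |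
      (∀ i, x i = 0 ∨ x i = 1) ∧ ∑ i : Fin n, 2 ^ (i : ℕ) * x i ≤ (bbar : ℝ)} with hS
  set P : Set (Fin n → ℝ) := {x : Fin n → ℝ |
      (∀ i, 0 ≤ x i ∧ x i ≤ 1) ∧ ∀ j ∈ J, ∑ k, a j k * x k ≤ b j} with hP
  -- Part 1 : |J| ≤ n - 1
  have hex1 : ∃ j, xbar j = 1 := by
    by_contra h
    push_neg at h
    have hz : ∀ j, xbar j = 0 := fun j => (hxbar j).resolve_right (h j)
    rw [Finset.sum_congr rfl (fun j _ => by rw [hz j, mul_zero]), Finset.sum_const_zero] at hexp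
    have : (1:ℝ) ≤ (bbar:ℝ) := by exact_mod_cast hb
    linarith
  obtain ⟨j1, hj1⟩ := hex1
  have hj1J : j1 ∉ J := fun h => by rw [(hJ j1).mp h] at hj1; norm_num at hj1
  have hcard : J.card ≤ n - 1 := by
    have hne : J ≠ Finset.univ := fun h => hj1J (h ▸ Finset.mem_univ j1)
    have := Finset.card_lt_card (Finset.ssubset_univ_iff.mpr hne)
    rw [Finset.card_univ, Fintype.card_fin] at this
    omega
  refine ⟨hcard, ?_⟩
  -- direction ⊆ : every 0/1 knapsack point satisfies the cover inequalities
  have hSsubP : S ⊆ P := by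
    rintro x ⟨hx01, hxval⟩
    have hx0 : ∀ i, 0 ≤ x i := fun i => by rcases hx01 i with h | h <;> simp [h]
    refine ⟨fun i => by rcases hx01 i with h | h <;> simp [h], ?_⟩
    intro j hj
    rw [rowsum hxbar ha j x, bval hxbar ha hbdef j]
    by_contra hlt
    push_neg at hlt
    have hsum : ∑ k ∈ supp xbar j, (1 - x k) < 1 := by
      rw [Finset.sum_sub_distrib, Finset.sum_const, nsmul_eq_mul, mul_one]
      linarith
    have hall : ∀ k ∈ supp xbar j, x k = 1 := by
      intro k hk
      have h' : (1:ℝ) - x k = 0 := zero_one_sum (s := supp xbar j) (f := fun k => 1 - x k)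
        (fun i hi => by rcases hx01 i with h | h <;> simp [h]) hsum k hk
      linarith
    have hxj1 : x j = 1 := hall j (mem_supp.mpr (Or.inl rfl))
    have hxbj : xbar j = 0 := (hJ j).mp hj
    have hlt2 := value_lt hxbar hx0 j hxj1 hxbj
      (fun k hk h1 => hall k (mem_supp.mpr (Or.inr ⟨hk, h1⟩)))
    rw [← hexp] at hlt2
    linarith
  -- convexity of P
  have hPconv : Convex ℝ P := by
    intro y hy z hz p q hp hq hpq
    constructor
    · intro i
      have hyi := hy.1 i
      have hzi := hz.1 i
      have hval : (p • y + q • z) i = p * y i + q * z i := by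
        simp [Pi.smul_apply, smul_eq_mul]
      rw [hval]
      constructor <;> nlinarith [hyi.1, hyi.2, hzi.1, hzi.2]
    · intro j hj
      have hys := hy.2 j hj
      have hzs := hz.2 j hj
      have hsum : ∑ k, a j k * (p • y + q • z) k
          = p * (∑ k, a j k * y k) + q * (∑ k, a j k * z k) := by
        rw [Finset.mul_sum, Finset.mul_sum, ← Finset.sum_add_distrib]
        apply Finset.sum_congr rfl
        intro k _
        simp [Pi.smul_apply, smul_eq_mul]
        ring
      rw [hsum]
      calc p * (∑ k, a j k * y k) + q * (∑ k, a j k * z k)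
          ≤ p * b j + q * b j :=
            add_le_add (mul_le_mul_of_nonneg_left hys hp) (mul_le_mul_of_nonneg_left hzs hq)
        _ = b j := by rw [← add_mul, hpq, one_mul]
  -- topological facts
  have hPclosed : IsClosed P := by
    have h1 : IsClosed {x : Fin n → ℝ | ∀ i, 0 ≤ x i ∧ x i ≤ 1} := by
      have he : {x : Fin n → ℝ | ∀ i, 0 ≤ x i ∧ x i ≤ 1}
          = ⋂ i, ({x : Fin n → ℝ | 0 ≤ x i} ∩ {x : Fin n → ℝ | x i ≤ 1}) := by
        ext x
        simp [Set.mem_iInter, forall_and]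
      rw [he]
      exact isClosed_iInter fun i =>
        ((isClosed_le continuous_const (continuous_apply i)).inter
          (isClosed_le (continuous_apply i) continuous_const))
    have h2 : IsClosed {x : Fin n → ℝ | ∀ j ∈ J, ∑ k, a j k * x k ≤ b j} := by
      have he : {x : Fin n → ℝ | ∀ j ∈ J, ∑ k, a j k * x k ≤ b j}
          = ⋂ j ∈ J, {x : Fin n → ℝ | ∑ k, a j k * x k ≤ b j} := by
        ext x
        simp [Set.mem_iInter]
      rw [he]
      exact isClosed_biInter fun j hj =>
        isClosed_le (continuous_finset_sum _ fun k _ =>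
          continuous_const.mul (continuous_apply k)) continuous_const
    have he : P = {x : Fin n → ℝ | ∀ i, 0 ≤ x i ∧ x i ≤ 1}
        ∩ {x : Fin n → ℝ | ∀ j ∈ J, ∑ k, a j k * x k ≤ b j} := rfl
    rw [he]
    exact h1.inter h2
  have hPcomp : IsCompact P := by
    refine IsCompact.of_isClosed_subset (isCompact_Icc (a := (0 : Fin n → ℝ)) (b := 1))
      hPclosed ?_
    intro x hx
    rw [Set.mem_Icc]
    constructor
    · intro i
      exact (hx.1 i).1
    · intro i
      exact (hx.1 i).2
  have hSfin : S.Finite := by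
    apply Set.Finite.subset (Set.Finite.pi (fun i : Fin n => Set.toFinite ({0, 1} : Set ℝ)))
    intro x hx
    rw [Set.mem_pi]
    intro i _
    rcases hx.1 i with h | h <;> simp [h]
  have hSclosed : IsClosed (convexHull ℝ S) := hSfin.isClosed_convexHull ℝ
  -- extreme points of P are integral knapsack points
  have hext : P.extremePoints ℝ ⊆ S := by
    intro x hx
    obtain ⟨hxP, hxseg⟩ := hx
    have hrows' : ∀ j ∈ J, ∑ k ∈ supp xbar j, x k ≤ ((supp xbar j).card : ℝ) - 1 := by
      intro j hj
      have := hxP.2 j hj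
      rwa [rowsum hxbar ha, bval hxbar ha hbdef] at this
    have hint : ∀ i, x i = 0 ∨ x i = 1 := by
      by_contra hcon
      obtain ⟨d, hd0, hdfrac, hdle, hdt⟩ :=
        exists_dir xbar hxbar J hJ x hxP.1 (not_forall.mp hcon)
      obtain ⟨ε, hεpos, ⟨hb1, hr1⟩, ⟨hb2, hr2⟩⟩ :=
        move hn J (supp xbar) (fun j => ((supp xbar j).card : ℝ) - 1) x d
          hxP.1 hrows' hdfrac hdle hdt
      have hp1 : x + ε • d ∈ P := by
        constructor
        · intro i
          have := hb1 i
          simpa [Pi.smul_apply, smul_eq_mul] using this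
        · intro j hj
          rw [rowsum hxbar ha, bval hxbar ha hbdef]
          have := hr1 j hj
          have heq : ∑ k ∈ supp xbar j, (x + ε • d) k
              = ∑ k ∈ supp xbar j, (x k + ε * d k) := by
            apply Finset.sum_congr rfl
            intro k _
            simp [Pi.smul_apply, smul_eq_mul]
          rw [heq]
          exact this
      have hp2 : x - ε • d ∈ P := by
        constructor
        · intro i
          have := hb2 i
          simpa [Pi.smul_apply, smul_eq_mul, sub_eq_add_neg] using this
        · intro j hj
          rw [rowsum hxbar ha, bval hxbar ha hbdef]
          have := hr2 j hj
          have heq : ∑ k ∈ supp xbar j, (x - ε • d) k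
              = ∑ k ∈ supp xbar j, (x k - ε * d k) := by
            apply Finset.sum_congr rfl
            intro k _
            simp [Pi.smul_apply, smul_eq_mul, sub_eq_add_neg]
          rw [heq]
          exact this
      have hseg : x ∈ openSegment ℝ (x - ε • d) (x + ε • d) := by
        refine ⟨1/2, 1/2, by norm_num, by norm_num, by norm_num, ?_⟩
        funext i
        simp [Pi.smul_apply, smul_eq_mul]
        ring
      obtain hleft := hxseg hp2 hp1 hseg
      have : ε • d = 0 := by
        have h := sub_eq_self.mp hleft
        exact h
      rcases smul_eq_zero.mp this with h | h
      · exact hεpos.ne' h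
      · exact hd0 h
    refine ⟨hint, ?_⟩
    by_contra hval
    push_neg at hval
    rw [hexp] at hval
    have hx0 : ∀ i, 0 ≤ x i := fun i => (hxP.1 i).1
    set D : Finset (Fin n) := Finset.univ.filter (fun k => x k ≠ xbar k) with hD
    have hDne : D.Nonempty := by
      rw [Finset.filter_nonempty_iff]
      by_contra h
      push_neg at h
      have hxx : ∀ k, x k = xbar k := fun k => h k (Finset.mem_univ k)
      have heq : ∑ i : Fin n, 2 ^ (i:ℕ) * x i = ∑ j : Fin n, 2 ^ (j:ℕ) * xbar j :=
        Finset.sum_congr rfl (fun k _ => by rw [hxx k])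
      rw [heq] at hval
      exact lt_irrefl _ hval
    set j := D.max' hDne with hj
    have hjD : j ∈ D := D.max'_mem hDne
    have hjne : x j ≠ xbar j := (Finset.mem_filter.mp hjD).2
    have hmax : ∀ k, j < k → x k = xbar k := by
      intro k hk
      by_contra hne
      have : k ∈ D := Finset.mem_filter.mpr ⟨Finset.mem_univ k, hne⟩
      exact absurd hk (not_lt.mpr (D.le_max' k this))
    rcases hxbar j with hbj | hbj
    · -- xbar j = 0, so x j = 1 and j ∈ J; the cover inequality is violated
      have hxj : x j = 1 := by
        rcases hint j with h | h
        · rw [h, hbj] at hjne; exact absurd rfl hjne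
        · exact h
      have hjJ : j ∈ J := (hJ j).mpr hbj
      have h1 : (1:ℝ) ≤ ∑ k ∈ supp xbar j, (1 - x k) := by
        have := hrows' j hjJ
        rw [Finset.sum_sub_distrib, Finset.sum_const, nsmul_eq_mul, mul_one]
        linarith
      have hzero : ∃ k ∈ supp xbar j, x k = 0 := by
        by_contra h
        push_neg at h
        have hallone : ∀ k ∈ supp xbar j, (1 : ℝ) - x k = 0 := by
          intro k hk
          rcases hint k with h' | h'
          · exact absurd h' (h k hk)
          · rw [h']; ring
        rw [Finset.sum_eq_zero hallone] at h1
        linarith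
      obtain ⟨k, hk, hxk⟩ := hzero
      rcases mem_supp.mp hk with h | ⟨hlt, h1k⟩
      · rw [h, hxj] at hxk; norm_num at hxk
      · rw [hmax k hlt, h1k] at hxk; norm_num at hxk
    ·
      have hxj : x j = 0 := by
        rcases hint j with h | h
        · exact h
        · rw [h, hbj] at hjne; exact absurd rfl hjne
      have hxb0 : ∀ k, 0 ≤ xbar k := fun k => by rcases hxbar k with h | h <;> simp [h]
      have := value_lt hint hxb0 j hbj hxj
        (fun k hk h1 => by rw [← hmax k hk]; exact h1)
      linarith
  -- assembly
  have hsub1 : convexHull ℝ S ⊆ P := convexHull_min hSsubP hPconv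
  have hsub2 : P ⊆ convexHull ℝ S := by
    have hKM := closure_convexHull_extremePoints hPcomp hPconv
    intro x hx
    have hx' : x ∈ closure (convexHull ℝ (P.extremePoints ℝ)) := by
      rw [hKM]
      exact hx
    have hmono : closure (convexHull ℝ (P.extremePoints ℝ))
        ⊆ closure (convexHull ℝ S) := closure_mono (convexHull_mono hext)
    have := hmono hx'
    rwa [hSclosed.closure_eq] at this
  exact Set.Subset.antisymm hsub1 hsub2
end

section
/- Let B ∈ Γ^q_u be an affine binarization polytope. Then there exists a linear binarization polytope B′ ∈ Γ^q_u and a unimodular transformation of the form g(x,z) = (x, w̄ + Dz), where w̄ ∈ {0,1}^q and D is the diagonal matrix with entries D_{jj} = 1 − 2w̄_j (so D is unimodular and g is an affine map with unimodular integral linear part and integral translation), such that B′ = g(B). -/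
/-!
Pick a point `(0, w̄)` of `B` with `w̄ ∈ {0,1}^q`; it exists because `0` lies in the projection of
the binary points of `B`. Evaluating `x = α·z + α₀` there gives `α₀ = -α·w̄`, so
`x = α·(z - w̄)` on `B`. The map `g` reflects the coordinates `z_j` with `w̄_j = 1` about `1/2`:
it is an affine involution of the unit cube that preserves rationality and `{0,1}^q`, so `g(B)`
is again in `Γ^q_u`, and since `D(w̄ + Dz) = z - w̄` we get `x = (Dα)·z'` on `g(B)`.
-/

open Set

def IsBinary {q : ℕ} (z : Fin q → ℝ) : Prop :=
  ∀ j, z j = 0 ∨ z j = 1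

def flipCoord (w t : ℝ) : ℝ :=
  w + (1 - 2 * w) * t

section FlipCoord

variable {w : ℝ}

lemma flipCoord_flipCoord (hw : w = 0 ∨ w = 1) (t : ℝ) : flipCoord w (flipCoord w t) = t := by
  rcases hw with rfl | rfl <;> simp only [flipCoord] <;> ring

lemma flipCoord_mem_Icc (hw : w = 0 ∨ w = 1) {t : ℝ} (ht : t ∈ Icc 0 1) :
    flipCoord w t ∈ Icc 0 1 := by
  obtain ⟨h0, h1⟩ := ht
  rcases hw with rfl | rfl <;> simp only [flipCoord] <;> constructor <;> linarith

lemma flipCoord_binary (hw : w = 0 ∨ w = 1) {t : ℝ} (ht : t = 0 ∨ t = 1) :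
    flipCoord w t = 0 ∨ flipCoord w t = 1 := by
  rcases hw with rfl | rfl <;> rcases ht with rfl | rfl <;> norm_num [flipCoord]

lemma exists_rat_flipCoord (hw : w = 0 ∨ w = 1) (r : ℚ) : ∃ s : ℚ, flipCoord w r = s := by
  rcases hw with rfl | rfl
  · exact ⟨r, by simp [flipCoord]⟩
  · exact ⟨1 - r, by push_cast [flipCoord]; ring⟩

lemma one_sub_two_mul_mul_flipCoord (hw : w = 0 ∨ w = 1) (t : ℝ) :
    (1 - 2 * w) * flipCoord w t = t - w := by
  rcases hw with rfl | rfl <;> simp only [flipCoord] <;> ring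

end FlipCoord

/-- The map `g(x, z) = (x, w + D z)` with `D = diag(1 - 2w)`. -/
noncomputable def binFlip {q : ℕ} (w : Fin q → ℝ) : ℝ × (Fin q → ℝ) →ᵃ[ℝ] ℝ × (Fin q → ℝ) :=
  (LinearMap.id.prodMap (LinearMap.pi fun j => (1 - 2 * w j) • LinearMap.proj j)).toAffineMap +
    AffineMap.const ℝ _ (0, w)

namespace binFlip

variable {q : ℕ} {w : Fin q → ℝ}

@[simp] lemma apply (w : Fin q → ℝ) (p : ℝ × (Fin q → ℝ)) :
    binFlip w p = (p.1, fun j => flipCoord (w j) (p.2 j)) := by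
  ext j
  · simp [binFlip]
  · simp [binFlip, flipCoord, add_comm]

lemma involutive (hw : IsBinary w) : Function.Involutive (binFlip w) := fun p => by
  ext j
  · simp
  · simp [flipCoord_flipCoord (hw j)]

lemma isBinary_snd_iff (hw : IsBinary w) (p : ℝ × (Fin q → ℝ)) :
    IsBinary (binFlip w p).2 ↔ IsBinary p.2 := by
  have flip_binary {p : ℝ × (Fin q → ℝ)} (hp : IsBinary p.2) : IsBinary (binFlip w p).2 :=
    fun j => by simpa using flipCoord_binary (hw j) (hp j)
  refine ⟨fun h => ?_, flip_binary⟩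
  simpa only [involutive hw p] using flip_binary h

lemma image_inter_binary (hw : IsBinary w) (B : Set (ℝ × (Fin q → ℝ))) :
    binFlip w '' B ∩ {p | IsBinary p.2} = binFlip w '' (B ∩ {p | IsBinary p.2}) := by
  rw [← image_inter_preimage]
  congr 2
  ext p
  exact isBinary_snd_iff hw p

end binFlip

variable {u q : ℕ} {w : Fin q → ℝ} {B : Set (ℝ × (Fin q → ℝ))}

lemma IsRatPolytopeBin.image_binFlip (hw : IsBinary w) (hB : IsRatPolytopeBin q B) :
    IsRatPolytopeBin q (binFlip w '' B) := by
  classical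
  obtain ⟨V, hVrat, rfl⟩ := hB
  refine ⟨V.image (binFlip w), ?_, by rw [Finset.coe_image, AffineMap.image_convexHull]⟩
  simp only [Finset.mem_image]
  rintro _ ⟨p, hpV, rfl⟩
  obtain ⟨hx, hz⟩ := hVrat p hpV
  refine ⟨by simpa using hx, fun j => ?_⟩
  obtain ⟨r, hr⟩ := hz j
  simpa [hr] using exists_rat_flipCoord (hw j) r

lemma IsBinPoly.image_binFlip (hw : IsBinary w) (hB : IsBinPoly u q B) :
    IsBinPoly u q (binFlip w '' B) := by
  obtain ⟨hpoly, hbox, hproj⟩ := hB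
  refine ⟨hpoly.image_binFlip hw, ?_, ?_⟩
  · rintro _ ⟨p, hpB, rfl⟩
    obtain ⟨hx0, hxu, hz⟩ := hbox p hpB
    exact ⟨by simpa using hx0, by simpa using hxu,
      fun j => by simpa using flipCoord_mem_Icc (hw j) (hz j)⟩
  · change Prod.fst '' (binFlip w '' B ∩ {p | IsBinary p.2}) = _
    rw [binFlip.image_inter_binary hw, image_image]
    simp only [binFlip.apply]
    exact hproj

lemma IsBinPoly.exists_binary_mem_fst_eq_zero (hB : IsBinPoly u q B) :
    ∃ p ∈ B, IsBinary p.2 ∧ p.1 = 0 := by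
  have h0 : (0 : ℝ) ∈ Prod.fst '' (B ∩ {p | ∀ j, p.2 j = 0 ∨ p.2 j = 1}) := by
    rw [hB.2.2]
    exact ⟨0, Nat.zero_le u, by simp⟩
  obtain ⟨p, ⟨hpB, hbin⟩, hp⟩ := h0
  exact ⟨p, hpB, hbin, hp⟩

lemma fst_eq_sum_of_mem_image_binFlip (α : Fin q → ℝ) (α₀ : ℝ)
    (haff : ∀ p ∈ B, p.1 = (∑ j, α j * p.2 j) + α₀) (hw : IsBinary w) (hwB : (0, w) ∈ B) :
    ∀ p ∈ binFlip w '' B, p.1 = ∑ j, (1 - 2 * w j) * α j * p.2 j := by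
  have hα₀ : α₀ = -∑ j, α j * w j := by linarith [haff _ hwB]
  rintro _ ⟨p, hpB, rfl⟩
  calc (binFlip w p).1 = p.1 := by simp
    _ = ∑ j, α j * (p.2 j - w j) := by
        rw [haff p hpB, hα₀, ← sub_eq_add_neg, ← Finset.sum_sub_distrib]
        simp only [mul_sub]
    _ = ∑ j, (1 - 2 * w j) * α j * flipCoord (w j) (p.2 j) := by
        refine Finset.sum_congr rfl fun j _ => ?_
        rw [mul_comm (1 - 2 * w j), mul_assoc, one_sub_two_mul_mul_flipCoord (hw j)]
    _ = _ := by simp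

theorem stmt8_general (u q : ℕ)
    (B : Set (ℝ × (Fin q → ℝ))) (hB : IsBinPoly u q B)
    (α : Fin q → ℝ) (α₀ : ℝ) (haff : ∀ p ∈ B, p.1 = (∑ j, α j * p.2 j) + α₀) :
    ∃ wbar : Fin q → ℝ, (∀ j, wbar j = 0 ∨ wbar j = 1) ∧
      ∃ B' : Set (ℝ × (Fin q → ℝ)),
        B' = (fun p : ℝ × (Fin q → ℝ) =>
          (p.1, fun j : Fin q => wbar j + (1 - 2 * wbar j) * p.2 j)) '' B ∧
        IsBinPoly u q B' ∧
        ∃ β : Fin q → ℝ, ∀ p ∈ B', p.1 = ∑ j, β j * p.2 j := by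
  obtain ⟨⟨x, w⟩, hpB, hw, hx : x = 0⟩ := hB.exists_binary_mem_fst_eq_zero
  subst hx
  have hg : (fun p : ℝ × (Fin q → ℝ) => (p.1, fun j => w j + (1 - 2 * w j) * p.2 j)) =
      binFlip w := funext fun p => (binFlip.apply w p).symm
  refine ⟨w, hw, binFlip w '' B, by rw [hg], hB.image_binFlip hw, _,
    fst_eq_sum_of_mem_image_binFlip α α₀ haff hw hpB⟩

/-- Let `B ∈ Γ^q_u` be an affine binarization polytope, i.e.
`x = α·z + α₀` on `B`.  Then there is a 0-1 vector `w̄` such that the unimodular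
transformation `g(x,z) = (x, w̄ + Dz)`, where `D` is the diagonal matrix with entries
`D_{jj} = 1 - 2w̄_j`, maps `B` onto a linear binarization polytope `B' = g(B) ∈ Γ^q_u`
(so `x = β·z'` on `B'` for some `β`). -/
theorem stmt8 (u q : ℕ) (hu : 0 < u) (hq : 0 < q)
    (B : Set (ℝ × (Fin q → ℝ))) (hB : IsBinPoly u q B)
    (α : Fin q → ℝ) (α₀ : ℝ) (haff : ∀ p ∈ B, p.1 = (∑ j, α j * p.2 j) + α₀) :
    ∃ wbar : Fin q → ℝ, (∀ j, wbar j = 0 ∨ wbar j = 1) ∧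
      ∃ B' : Set (ℝ × (Fin q → ℝ)),
        B' = (fun p : ℝ × (Fin q → ℝ) =>
          (p.1, fun j : Fin q => wbar j + (1 - 2 * wbar j) * p.2 j)) '' B ∧
        IsBinPoly u q B' ∧
        ∃ β : Fin q → ℝ, ∀ p ∈ B', p.1 = ∑ j, β j * p.2 j :=
  stmt8_general u q B hB α α₀ haff
end

section
/- Let P = {x ∈ [0,3]² : 0 ≤ x₂ − x₁ ≤ 1/2} with I = {1,2}, and let B = conv({(0,(0,0)), (1,(1,0)), (2,(1,1)), (3,(0,1))}) ∈ Γ²₃, which is a non-affine binarization polytope. Let ℬ = (B,B), so P_ℬ = {(x,z₁,z₂) ∈ ℝ² × ℝ² × ℝ² : x ∈ P, (x_i,z_i) ∈ B for i = 1,2}, and let I′ = {3,4,5,6} index the four binarization variables. Then SC(P,I) ⊊ proj_x(SC(P_ℬ, I′)); in particular SC(P,I) = {x ∈ [0,3]² : x₁ = x₂}, and the point (1, 3/2) lies in proj_x(SC(P_ℬ, I′)) but not in SC(P,I). -/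
/-!
`P` lies in the strip `0 ≤ x₂ - x₁ ≤ 1/2`, so the single split `0 < x₂ - x₁ < 1` leaves only the
diagonal segment `[(0,0), (3,3)]`; its endpoints are integral and survive every split, so
`SC(P, I)` is that segment. In `P_ℬ` the diagonal is the projection of the hull of the four points
`((k, k), v_k, v_k)` over the vertices `(k, v_k)` of `B`, which are integral in the binarization
variables. The point `(1, 3/2)` lifts to the point of `P_ℬ` with all four binarization variables
equal to `1/2`, which survives every split in those variables: a split functional takes an
integer value there unless its coefficient sum is odd, and in that case, where the value is
`c + 1/2`, the lift is the midpoint of two points of `P_ℬ` at which the functional avoids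
`(c, c + 1)`.
-/

open Set

/-- Split functionals on `ℝ²` with integer coefficients on both variables
(`I = {1,2}`). -/
def splitsXY : Set ((ℝ × ℝ) → ℝ) :=
  {f | ∃ π₁ π₂ : ℤ, f = fun x => (π₁ : ℝ) * x.1 + (π₂ : ℝ) * x.2}

/-- Split functionals on the extended space `ℝ² × (ℝ² × ℝ²)` with integer coefficients
only on the four binarization variables (`I' = {3,4,5,6}`). -/
def splitsZ : Set (((ℝ × ℝ) × ((ℝ × ℝ) × (ℝ × ℝ))) → ℝ) :=
  {f | ∃ c₁₁ c₁₂ c₂₁ c₂₂ : ℤ, f = fun p =>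
    (c₁₁ : ℝ) * p.2.1.1 + (c₁₂ : ℝ) * p.2.1.2 + (c₂₁ : ℝ) * p.2.2.1 + (c₂₂ : ℝ) * p.2.2.2}

/-- Binarization-polytope conditions for `B ∈ Γ²_u` (with the two binary variables
written as a pair): `B ⊆ [0,u] × [0,1]²` and the 0-1 points of `B` project onto
`{0,1,…,u}`. -/
def IsBinPair (u : ℕ) (B : Set (ℝ × (ℝ × ℝ))) : Prop :=
  (∀ p ∈ B, 0 ≤ p.1 ∧ p.1 ≤ (u : ℝ) ∧ 0 ≤ p.2.1 ∧ p.2.1 ≤ 1 ∧ 0 ≤ p.2.2 ∧ p.2.2 ≤ 1) ∧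
  Prod.fst '' (B ∩ {p | (p.2.1 = 0 ∨ p.2.1 = 1) ∧ (p.2.2 = 0 ∨ p.2.2 = 1)}) =
    {x : ℝ | ∃ k : ℕ, k ≤ u ∧ x = (k : ℝ)}

theorem notMem_split_of_eq_int {t : ℝ} (m c : ℤ) (ht : t = m) : ¬ ((c : ℝ) < t ∧ t < c + 1) := by
  rintro ⟨h₁, h₂⟩
  rw [ht] at h₁ h₂
  have : c < m := by exact_mod_cast h₁
  have : m < c + 1 := by exact_mod_cast h₂
  omega

theorem eq_two_mul_add_one_of_half_mem_split {s c : ℤ} (h₁ : (c : ℝ) < s / 2)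
    (h₂ : (s : ℝ) / 2 < c + 1) : s = 2 * c + 1 := by
  have : 2 * c < s := by rify; linarith
  have : s < 2 * c + 2 := by rify; linarith
  omega

theorem notMem_split_of_eq_half_add {t : ℝ} (c k : ℤ) (hk : k ≠ 0) (ht : t = c + 1 / 2 + k / 2) :
    ¬ ((c : ℝ) < t ∧ t < c + 1) := by
  rintro ⟨h₁, h₂⟩
  have : -1 < k := by rify; linarith
  have : k < 1 := by rify; linarith
  omega

theorem mem_convexHull_of_eq_midpoint {E : Type*} [AddCommGroup E] [Module ℝ E] {s : Set E}
    {x a b : E} (ha : a ∈ s) (hb : b ∈ s) (hx : x = midpoint ℝ a b) : x ∈ convexHull ℝ s :=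
  hx ▸ (convex_convexHull ℝ s).midpoint_mem (subset_convexHull ℝ s ha) (subset_convexHull ℝ s hb)

section SplitClosure

variable {E : Type*} [AddCommGroup E] [Module ℝ E] {Λ : Set (E → ℝ)} {P : Set E}

theorem mem_splitClosure_iff {x : E} :
    x ∈ splitClosure Λ P ↔
      ∀ f ∈ Λ, ∀ c : ℤ, x ∈ convexHull ℝ (P \ {y | (c : ℝ) < f y ∧ f y < c + 1}) := by
  simp only [splitClosure, mem_iInter]

theorem splitClosure_subset_convexHull_sdiff {f : E → ℝ} (hf : f ∈ Λ) (c : ℤ) :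
    splitClosure Λ P ⊆ convexHull ℝ (P \ {y | (c : ℝ) < f y ∧ f y < c + 1}) :=
  fun _ hx => mem_splitClosure_iff.1 hx f hf c

theorem convexHull_integral_subset_splitClosure :
    convexHull ℝ {x ∈ P | ∀ f ∈ Λ, ∃ m : ℤ, f x = m} ⊆ splitClosure Λ P := by
  refine fun x hx => mem_splitClosure_iff.2 fun f hf c => convexHull_mono ?_ hx
  rintro y ⟨hyP, hy⟩
  obtain ⟨m, hm⟩ := hy f hf
  exact ⟨hyP, notMem_split_of_eq_int m c hm⟩

end SplitClosure

theorem exists_int_eq_of_mem_splitsXY {f : ℝ × ℝ → ℝ} (hf : f ∈ splitsXY) (m₁ m₂ : ℤ) :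
    ∃ m : ℤ, f (m₁, m₂) = m := by
  obtain ⟨π₁, π₂, rfl⟩ := hf
  exact ⟨π₁ * m₁ + π₂ * m₂, by push_cast; ring⟩

theorem exists_int_eq_of_mem_splitsZ {f : (ℝ × ℝ) × (ℝ × ℝ) × (ℝ × ℝ) → ℝ} (hf : f ∈ splitsZ)
    (x : ℝ × ℝ) (a₁ a₂ b₁ b₂ : ℤ) : ∃ m : ℤ, f (x, (a₁, a₂), (b₁, b₂)) = m := by
  obtain ⟨c₁₁, c₁₂, c₂₁, c₂₂, rfl⟩ := hf
  exact ⟨c₁₁ * a₁ + c₁₂ * a₂ + c₂₁ * b₁ + c₂₂ * b₂, by push_cast; ring⟩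

theorem diagonal_eq_segment :
    {x : ℝ × ℝ | 0 ≤ x.1 ∧ x.1 ≤ 3 ∧ x.1 = x.2} = segment ℝ (0, 0) (3, 3) := by
  rw [segment_eq_image]
  ext ⟨a, b⟩
  simp only [mem_ofPred_eq, mem_image, mem_Icc, Prod.ext_iff, Prod.smul_mk, Prod.mk_add_mk,
    smul_eq_mul]
  constructor
  · rintro ⟨h₀, h₃, rfl⟩
    exact ⟨a / 3, ⟨by linarith, by linarith⟩, by ring, by ring⟩
  · rintro ⟨θ, ⟨h₀, h₁⟩, rfl, rfl⟩
    exact ⟨by linarith, by linarith, rfl⟩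

def stripP : Set (ℝ × ℝ) :=
  {x | 0 ≤ x.1 ∧ x.1 ≤ 3 ∧ 0 ≤ x.2 ∧ x.2 ≤ 3 ∧ 0 ≤ x.2 - x.1 ∧ x.2 - x.1 ≤ 1 / 2}

def binB : Set (ℝ × ℝ × ℝ) :=
  convexHull ℝ {(0, 0, 0), (1, 1, 0), (2, 1, 1), (3, 0, 1)}

/-- `P_ℬ` for `ℬ = (B, B)`; a point is `(x, (z₁, z₂))` with `zᵢ` the binarization of `xᵢ`. -/
def binarization (P : Set (ℝ × ℝ)) (B : Set (ℝ × ℝ × ℝ)) :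
    Set ((ℝ × ℝ) × (ℝ × ℝ) × (ℝ × ℝ)) :=
  {p | p.1 ∈ P ∧ (p.1.1, p.2.1) ∈ B ∧ (p.1.2, p.2.2) ∈ B}

theorem binB_subset_facets :
    binB ⊆ {p | p.2.1 + p.2.2 ≤ p.1 ∧ p.1 ≤ p.2.1 + 3 * p.2.2 ∧
      3 * p.2.2 ≤ p.1 + p.2.1 ∧ p.1 + p.2.1 - p.2.2 ≤ 2} := by
  refine convexHull_min ?_ ?_
  · rintro q (rfl | rfl | rfl | rfl) <;> norm_num
  · rintro x ⟨h₁, h₂, h₃, h₄⟩ y ⟨k₁, k₂, k₃, k₄⟩ a b ha hb hab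
    simp only [mem_ofPred_eq, Prod.fst_add, Prod.snd_add, Prod.smul_fst, Prod.smul_snd,
      smul_eq_mul]
    refine ⟨?_, ?_, ?_, ?_⟩ <;>
      nlinarith [mul_le_mul_of_nonneg_left h₁ ha, mul_le_mul_of_nonneg_left k₁ hb,
        mul_le_mul_of_nonneg_left h₂ ha, mul_le_mul_of_nonneg_left k₂ hb,
        mul_le_mul_of_nonneg_left h₃ ha, mul_le_mul_of_nonneg_left k₃ hb,
        mul_le_mul_of_nonneg_left h₄ ha, mul_le_mul_of_nonneg_left k₄ hb]

theorem mem_binB_iff {p : ℝ × ℝ × ℝ} :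
    p ∈ binB ↔ p.2.1 + p.2.2 ≤ p.1 ∧ p.1 ≤ p.2.1 + 3 * p.2.2 ∧
      3 * p.2.2 ≤ p.1 + p.2.1 ∧ p.1 + p.2.1 - p.2.2 ≤ 2 := by
  refine ⟨fun hp => binB_subset_facets hp, ?_⟩
  obtain ⟨x, z₁, z₂⟩ := p
  rintro ⟨h₁, h₂, h₃, h₄⟩
  -- barycentric coordinates of `(x, z₁, z₂)`; the facet inequalities say they are nonnegative
  set w : Fin 4 → ℝ :=
    ![(2 - x - z₁ + z₂) / 2, (x + z₁ - 3 * z₂) / 2, (z₁ + 3 * z₂ - x) / 2, (x - z₁ - z₂) / 2]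
  set v : Fin 4 → ℝ × ℝ × ℝ := ![(0, 0, 0), (1, 1, 0), (2, 1, 1), (3, 0, 1)]
  have hw : ∑ i, w i = 1 := by
    simp only [Fin.sum_univ_four, Matrix.cons_val_zero, Matrix.cons_val_one, Matrix.cons_val, w]
    ring
  have hp : Finset.univ.centerMass w v = (x, z₁, z₂) := by
    rw [Finset.centerMass_eq_of_sum_1 _ _ hw]
    simp only [Fin.sum_univ_four, Matrix.cons_val_zero, Matrix.cons_val_one, Matrix.cons_val,
      Prod.smul_mk, smul_eq_mul, Prod.mk_add_mk, Prod.mk.injEq, w, v]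
    refine ⟨by ring, by ring, by ring⟩
  rw [← hp]
  refine Finset.centerMass_mem_convexHull _ (fun i _ => ?_) (by simp [hw]) (fun i _ => ?_)
  · fin_cases i <;> simp [w] <;> linarith
  · fin_cases i <;> simp [v]

theorem isBinPair_binB : IsBinPair 3 binB := by
  refine ⟨fun p hp => ?_, ?_⟩
  · obtain ⟨h₁, h₂, h₃, h₄⟩ := mem_binB_iff.1 hp
    push_cast
    refine ⟨?_, ?_, ?_, ?_, ?_, ?_⟩ <;> linarith
  ext x
  simp only [mem_image, mem_inter_iff, mem_ofPred_eq]
  constructor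
  · rintro ⟨⟨x, z₁, z₂⟩, ⟨hp, hz₁, hz₂⟩, rfl⟩
    obtain ⟨h₁, h₂, h₃, h₄⟩ := mem_binB_iff.1 hp
    dsimp only at hz₁ hz₂ h₁ h₂ h₃ h₄ ⊢
    rcases hz₁ with rfl | rfl <;> rcases hz₂ with rfl | rfl
    · exact ⟨0, by norm_num, by push_cast; linarith⟩
    · exact ⟨3, by norm_num, by push_cast; linarith⟩
    · exact ⟨1, by norm_num, by push_cast; linarith⟩
    · exact ⟨2, by norm_num, by push_cast; linarith⟩
  · rintro ⟨k, hk, rfl⟩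
    interval_cases k
    · exact ⟨(0, 0, 0), ⟨by norm_num [mem_binB_iff], by norm_num⟩, by norm_num⟩
    · exact ⟨(1, 1, 0), ⟨by norm_num [mem_binB_iff], by norm_num⟩, by norm_num⟩
    · exact ⟨(2, 1, 1), ⟨by norm_num [mem_binB_iff], by norm_num⟩, by norm_num⟩
    · exact ⟨(3, 0, 1), ⟨by norm_num [mem_binB_iff], by norm_num⟩, by norm_num⟩

theorem binB_not_affine :
    ¬ ∃ α₁ α₂ α₀ : ℝ, ∀ p ∈ binB, p.1 = α₁ * p.2.1 + α₂ * p.2.2 + α₀ := by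
  rintro ⟨α₁, α₂, α₀, h⟩
  have e₀ := h (0, 0, 0) (by norm_num [mem_binB_iff])
  have e₁ := h (1, 1, 0) (by norm_num [mem_binB_iff])
  have e₂ := h (2, 1, 1) (by norm_num [mem_binB_iff])
  have e₃ := h (3, 0, 1) (by norm_num [mem_binB_iff])
  norm_num at e₀ e₁ e₂ e₃
  linarith

theorem stripP_sdiff_split :
    stripP \ {x | ((0 : ℤ) : ℝ) < ((-1 : ℤ) : ℝ) * x.1 + ((1 : ℤ) : ℝ) * x.2 ∧
      ((-1 : ℤ) : ℝ) * x.1 + ((1 : ℤ) : ℝ) * x.2 < ((0 : ℤ) : ℝ) + 1} =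
      segment ℝ (0, 0) (3, 3) := by
  rw [← diagonal_eq_segment]
  ext x
  simp only [stripP, mem_sdiff, mem_ofPred_eq, not_and, not_lt]
  push_cast
  constructor
  · rintro ⟨⟨h₁, h₂, -, -, h₅, h₆⟩, h⟩
    refine ⟨h₁, h₂, ?_⟩
    rcases le_or_gt (-1 * x.1 + 1 * x.2) 0 with hle | hlt
    · linarith
    · linarith [h hlt]
  · rintro ⟨h₁, h₂, h₃⟩
    exact ⟨⟨h₁, h₂, by linarith, by linarith, by linarith, by linarith⟩, fun _ => by linarith⟩

theorem splitClosure_stripP : splitClosure splitsXY stripP = segment ℝ (0, 0) (3, 3) := by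
  apply Subset.antisymm
  · have h := splitClosure_subset_convexHull_sdiff (Λ := splitsXY) (P := stripP) ⟨-1, 1, rfl⟩ 0
    rwa [stripP_sdiff_split, (convex_segment _ _).convexHull_eq] at h
  · rw [← convexHull_pair]
    refine (convexHull_mono ?_).trans convexHull_integral_subset_splitClosure
    rintro x (rfl | rfl)
    · exact ⟨by norm_num [stripP], fun f hf => by simpa using exists_int_eq_of_mem_splitsXY hf 0 0⟩
    · exact ⟨by norm_num [stripP], fun f hf => by simpa using exists_int_eq_of_mem_splitsXY hf 3 3⟩

theorem segment_subset_fst_image_splitClosure_binarization :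
    segment ℝ (0, 0) (3, 3) ⊆ Prod.fst '' splitClosure splitsZ (binarization stripP binB) := by
  set L : Set ((ℝ × ℝ) × (ℝ × ℝ) × (ℝ × ℝ)) :=
    {((0, 0), (0, 0), (0, 0)), ((1, 1), (1, 0), (1, 0)), ((2, 2), (1, 1), (1, 1)),
      ((3, 3), (0, 1), (0, 1))}
  have hL : L ⊆ {p ∈ binarization stripP binB | ∀ f ∈ splitsZ, ∃ m : ℤ, f p = m} := by
    rintro p (rfl | rfl | rfl | rfl) <;>
      refine ⟨by norm_num [binarization, stripP, mem_binB_iff], fun f hf => ?_⟩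
    · simpa using exists_int_eq_of_mem_splitsZ hf _ 0 0 0 0
    · simpa using exists_int_eq_of_mem_splitsZ hf _ 1 0 1 0
    · simpa using exists_int_eq_of_mem_splitsZ hf _ 1 1 1 1
    · simpa using exists_int_eq_of_mem_splitsZ hf _ 0 1 0 1
  have hproj : Prod.fst '' convexHull ℝ L = convexHull ℝ {(0, 0), (1, 1), (2, 2), (3, 3)} := by
    rw [← LinearMap.coe_fst (R := ℝ), LinearMap.image_convexHull]
    simp [L, image_insert_eq]
  calc segment ℝ (0, 0) (3, 3)
      ⊆ convexHull ℝ {(0, 0), (1, 1), (2, 2), (3, 3)} :=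
      segment_subset_convexHull (by simp) (by simp)
    _ = Prod.fst '' convexHull ℝ L := hproj.symm
    _ ⊆ _ := image_mono ((convexHull_mono hL).trans convexHull_integral_subset_splitClosure)

theorem lift_mem_splitClosure_binarization :
    ((1, 3 / 2), (1 / 2, 1 / 2), (1 / 2, 1 / 2)) ∈
      splitClosure splitsZ (binarization stripP binB) := by
  rw [mem_splitClosure_iff]
  rintro f ⟨c₁₁, c₁₂, c₂₁, c₂₂, rfl⟩ c
  by_cases hsplit : (c : ℝ) < c₁₁ * (1 / 2) + c₁₂ * (1 / 2) + c₂₁ * (1 / 2) + c₂₂ * (1 / 2) ∧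
    (c₁₁ : ℝ) * (1 / 2) + c₁₂ * (1 / 2) + c₂₁ * (1 / 2) + c₂₂ * (1 / 2) < c + 1
  swap
  · exact subset_convexHull ℝ _ ⟨by norm_num [binarization, stripP, mem_binB_iff], hsplit⟩
  have hodd : (c₁₁ + c₁₂ + c₂₁ + c₂₂ : ℝ) = 2 * c + 1 := by
    exact_mod_cast eq_two_mul_add_one_of_half_mem_split (s := c₁₁ + c₁₂ + c₂₁ + c₂₂)
      (by push_cast; linarith) (by push_cast; linarith)
  rcases eq_or_ne c₂₁ 0 with h₂₁ | h₂₁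
  · refine mem_convexHull_of_eq_midpoint (a := ((0, 1 / 2), (0, 0), (1 / 2, 0)))
      (b := ((2, 5 / 2), (1, 1), (1 / 2, 1)))
      ⟨by norm_num [binarization, stripP, mem_binB_iff], ?_⟩
      ⟨by norm_num [binarization, stripP, mem_binB_iff], ?_⟩ (by norm_num [midpoint_eq_smul_add])
    · exact notMem_split_of_eq_int 0 c (by simp [h₂₁])
    · exact notMem_split_of_eq_int (c₁₁ + c₁₂ + c₂₂) c (by simp [h₂₁])
  · refine mem_convexHull_of_eq_midpoint (a := ((1, 3 / 2), (1 / 2, 1 / 2), (0, 1 / 2)))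
      (b := ((1, 3 / 2), (1 / 2, 1 / 2), (1, 1 / 2)))
      ⟨by norm_num [binarization, stripP, mem_binB_iff], ?_⟩
      ⟨by norm_num [binarization, stripP, mem_binB_iff], ?_⟩ (by norm_num [midpoint_eq_smul_add])
    · exact notMem_split_of_eq_half_add c (-c₂₁) (neg_ne_zero.2 h₂₁) (by push_cast; linarith)
    · exact notMem_split_of_eq_half_add c c₂₁ h₂₁ (by linarith)

/-- Let `P = {x ∈ [0,3]² : 0 ≤ x₂ - x₁ ≤ 1/2}`, `I = {1,2}`, and let
`B = conv{(0,(0,0)),(1,(1,0)),(2,(1,1)),(3,(0,1))} ∈ Γ²₃`, a non-affine binarization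
polytope.  With `ℬ = (B,B)` and `I'` indexing the four binarization variables,
`SC(P,I) ⊊ proj_x(SC(P_ℬ,I'))`; in particular `SC(P,I) = {x ∈ [0,3]² : x₁ = x₂}` and
the point `(1, 3/2)` lies in `proj_x(SC(P_ℬ,I'))` but not in `SC(P,I)`. -/
theorem stmt9 (P : Set (ℝ × ℝ))
    (hP : P = {x | 0 ≤ x.1 ∧ x.1 ≤ 3 ∧ 0 ≤ x.2 ∧ x.2 ≤ 3 ∧
      0 ≤ x.2 - x.1 ∧ x.2 - x.1 ≤ 1 / 2})
    (B : Set (ℝ × (ℝ × ℝ)))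
    (hB : B = convexHull ℝ
      {((0 : ℝ), ((0 : ℝ), (0 : ℝ))), (1, (1, 0)), (2, (1, 1)), (3, (0, 1))})
    (PB : Set ((ℝ × ℝ) × ((ℝ × ℝ) × (ℝ × ℝ))))
    (hPB : PB = {p | p.1 ∈ P ∧ (p.1.1, p.2.1) ∈ B ∧ (p.1.2, p.2.2) ∈ B}) :
    IsBinPair 3 B ∧
    (¬ ∃ α₁ α₂ α₀ : ℝ, ∀ p ∈ B, p.1 = α₁ * p.2.1 + α₂ * p.2.2 + α₀) ∧
    splitClosure splitsXY P = {x : ℝ × ℝ | 0 ≤ x.1 ∧ x.1 ≤ 3 ∧ x.1 = x.2} ∧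
    splitClosure splitsXY P ⊂ Prod.fst '' splitClosure splitsZ PB ∧
    ((1 : ℝ), (3 / 2 : ℝ)) ∈ Prod.fst '' splitClosure splitsZ PB ∧
    ((1 : ℝ), (3 / 2 : ℝ)) ∉ splitClosure splitsXY P := by
  obtain rfl : P = stripP := hP
  obtain rfl : B = binB := hB
  obtain rfl : PB = binarization stripP binB := hPB
  have hlift :
      ((1 : ℝ), (3 / 2 : ℝ)) ∈ Prod.fst '' splitClosure splitsZ (binarization stripP binB) :=
    ⟨_, lift_mem_splitClosure_binarization, rfl⟩
  have hnot : ((1 : ℝ), (3 / 2 : ℝ)) ∉ splitClosure splitsXY stripP := by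
    rw [splitClosure_stripP, ← diagonal_eq_segment]
    norm_num
  refine ⟨isBinPair_binB, binB_not_affine, splitClosure_stripP.trans diagonal_eq_segment.symm,
    ?_, hlift, hnot⟩
  rw [ssubset_iff_of_subset
    (splitClosure_stripP ▸ segment_subset_fst_image_splitClosure_binarization)]
  exact ⟨_, hlift, hnot⟩
end
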